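/- arXiv:math/0611877 — 3 statements merged into one kernel-verified Lean document; each statement's English description precedes it below -/
import Mathlib

section
/- Let G be a group with a finite generating set X. Then (G,X) has the asynchronous loop shortening property if and only if (G,X) has the synchronous loop shortening property. -/
/-! Basic notions for a group `G` with a generating set `X`:
words over `X ∪ X⁻¹`, the word metric, paths, loops and fellow traveling. -/

namespace LoopShortening

variable {G : Type*} [Group G]

/-- `w` is a word over `X ∪ X⁻¹`: every letter of `w` lies in `X ∪ X⁻¹`. -/
def IsWord (X : Set G) (w : List G) : Prop := ∀ x ∈ w, x ∈ X ∨ x⁻¹ ∈ X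

/-- The word metric with respect to `X`: `wdist X g h` is the least `n` such that
`g⁻¹h` is a product of `n` elements of `X ∪ X⁻¹`. -/
noncomputable def wdist (X : Set G) (g h : G) : ℕ :=
  sInf {n : ℕ | ∃ l : List G, IsWord X l ∧ l.length = n ∧ g * l.prod = h}

/-- The point at time `t ∈ ℕ` along the path based at `g₀` labelled by the word `w`;
for `t ≥ |w|` this is the endpoint of the path. -/
def pathAt (g₀ : G) (w : List G) (t : ℕ) : G := g₀ * (w.take t).prod

/-- The word `w` labels a loop (its evaluation in `G` is the identity, so the
path it labels ends where it starts). -/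
def IsLoop (w : List G) : Prop := w.prod = 1

/-- The paths based at `g₀` and `h₀` labelled by `w` and `u` synchronously
`k`-fellow travel. -/
def SyncFellow (X : Set G) (k : ℕ) (g₀ : G) (w : List G) (h₀ : G) (u : List G) : Prop :=
  ∀ t : ℕ, wdist X (pathAt g₀ w t) (pathAt h₀ u t) ≤ k

/-- The paths based at `g₀` and `h₀` labelled by `w` and `u` asynchronously
`k`-fellow travel: there is a nondecreasing unbounded reparameterization `φ`. -/
def AsyncFellow (X : Set G) (k : ℕ) (g₀ : G) (w : List G) (h₀ : G) (u : List G) : Prop :=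
  ∃ φ : ℕ → ℕ, Monotone φ ∧ (∀ m : ℕ, ∃ t : ℕ, m ≤ φ t) ∧
    ∀ t : ℕ, wdist X (pathAt g₀ w t) (pathAt h₀ u (φ t)) ≤ k

/-- `(G,X)` has the synchronous loop shortening property: there is `k > 0` such that
every nonempty loop is synchronously `k`-fellow traveled by a strictly shorter loop. -/
def SyncLSP (X : Set G) : Prop :=
  ∃ k : ℕ, 0 < k ∧ ∀ (g₀ : G) (w : List G), IsWord X w → IsLoop w → w ≠ [] →
    ∃ (h₀ : G) (u : List G), IsWord X u ∧ IsLoop u ∧ u.length < w.length ∧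
      SyncFellow X k g₀ w h₀ u

/-- `(G,X)` has the asynchronous loop shortening property. -/
def AsyncLSP (X : Set G) : Prop :=
  ∃ k : ℕ, 0 < k ∧ ∀ (g₀ : G) (w : List G), IsWord X w → IsLoop w → w ≠ [] →
    ∃ (h₀ : G) (u : List G), IsWord X u ∧ IsLoop u ∧ u.length < w.length ∧
      AsyncFellow X k g₀ w h₀ u

/-! Synchronous fellow travelling is the case `φ = id` of asynchronous fellow travelling.
Conversely, let `u` asynchronously `k`-fellow travel the loop `w` along `ψ` (truncated at `|u|`)
and watch the lag `t - ψ t`, which grows by at most one per step. If the lag never rises by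
`J = 2k + 1` within `[0, |w|]`, then `|t - ψ t| < J` throughout (at the end because `|u| < |w|`),
so `u` itself synchronously `(3k + 1)`-fellow travels `w`. Otherwise there is a window `[c, t']`
over which the lag rises by exactly `J` while staying between its values at the two ends.
Replacing `w` on that window by a geodesic to `u`, the matching stretch of `u` and a geodesic
back to `w` saves at least `J - 2k = 1` letters and gives a loop that synchronously
`(4k + 1)`-fellow travels `w`. -/

section WordMetric

variable (X : Set G)

theorem IsWord.append {l₁ l₂ : List G} (h₁ : IsWord X l₁) (h₂ : IsWord X l₂) :
    IsWord X (l₁ ++ l₂) := fun x hx => (List.mem_append.1 hx).elim (h₁ x) (h₂ x)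

theorem IsWord.take {l : List G} (h : IsWord X l) (n : ℕ) : IsWord X (l.take n) :=
  fun x hx => h x (List.mem_of_mem_take hx)

theorem IsWord.drop {l : List G} (h : IsWord X l) (n : ℕ) : IsWord X (l.drop n) :=
  fun x hx => h x (List.mem_of_mem_drop hx)

theorem exists_isWord_prod_eq (hgen : Subgroup.closure X = ⊤) (g : G) :
    ∃ l : List G, IsWord X l ∧ l.prod = g := by
  have hg : g ∈ Submonoid.closure (X ∪ X⁻¹) := by
    rw [← Subgroup.closure_toSubmonoid, hgen]; trivial
  simpa [IsWord] using Submonoid.exists_list_of_mem_closure hg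

theorem wdist_le_length {g h : G} {l : List G} (hl : IsWord X l) (he : g * l.prod = h) :
    wdist X g h ≤ l.length :=
  Nat.sInf_le ⟨l, hl, rfl, he⟩

theorem wdist_self (g : G) : wdist X g g = 0 :=
  Nat.le_zero.1 (wdist_le_length X (l := []) (by simp [IsWord]) (by simp))

theorem exists_isWord_length_eq_wdist (hgen : Subgroup.closure X = ⊤) (g h : G) :
    ∃ l : List G, IsWord X l ∧ l.length = wdist X g h ∧ g * l.prod = h := by
  obtain ⟨l, hl, hprod⟩ := exists_isWord_prod_eq X hgen (g⁻¹ * h)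
  have hne : {n | ∃ l : List G, IsWord X l ∧ l.length = n ∧ g * l.prod = h}.Nonempty :=
    ⟨l.length, l, hl, rfl, by rw [hprod, mul_inv_cancel_left]⟩
  exact Nat.sInf_mem hne

theorem wdist_comm (hgen : Subgroup.closure X = ⊤) (g h : G) :
    wdist X g h = wdist X h g := by
  suffices key : ∀ a b : G, wdist X a b ≤ wdist X b a from
    le_antisymm (key g h) (key h g)
  intro a b
  obtain ⟨l, hl, hlen, he⟩ := exists_isWord_length_eq_wdist X hgen b a
  have hinv : IsWord X (l.map (·⁻¹)).reverse := by
    intro x hx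
    obtain ⟨y, hy, rfl⟩ := List.mem_map.1 (List.mem_reverse.1 hx)
    simpa [or_comm] using hl y hy
  rw [← hlen, ← List.length_map (f := (·⁻¹)), ← List.length_reverse]
  refine wdist_le_length X hinv ?_
  rw [← List.prod_inv_reverse, ← he, mul_inv_cancel_right]

theorem wdist_triangle (hgen : Subgroup.closure X = ⊤) (a b c : G) :
    wdist X a c ≤ wdist X a b + wdist X b c := by
  obtain ⟨l₁, h₁, len₁, e₁⟩ := exists_isWord_length_eq_wdist X hgen a b
  obtain ⟨l₂, h₂, len₂, e₂⟩ := exists_isWord_length_eq_wdist X hgen b c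
  rw [← len₁, ← len₂, ← List.length_append]
  exact wdist_le_length X (h₁.append X h₂) (by rw [List.prod_append, ← mul_assoc, e₁, e₂])

end WordMetric

section Paths

theorem pathAt_zero (g : G) (w : List G) : pathAt g w 0 = g := by simp [pathAt]

theorem pathAt_of_length_le (g : G) {w : List G} {t : ℕ} (h : w.length ≤ t) :
    pathAt g w t = g * w.prod := by
  rw [pathAt, List.take_of_length_le h]

theorem pathAt_add (g : G) (w : List G) (s r : ℕ) :
    pathAt g w (s + r) = pathAt (pathAt g w s) (w.drop s) r := by
  rw [pathAt, pathAt, pathAt, List.take_add, List.prod_append, mul_assoc]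

theorem pathAt_append (g : G) (p q : List G) (t : ℕ) :
    pathAt g (p ++ q) t = pathAt (pathAt g p t) q (t - p.length) := by
  rw [pathAt, pathAt, pathAt, List.take_append, List.prod_append, mul_assoc]

theorem pathAt_take (g : G) (w : List G) {t c : ℕ} (h : t ≤ c) :
    pathAt g (w.take c) t = pathAt g w t := by
  rw [pathAt, pathAt, List.take_take, min_eq_left h]

theorem pathAt_min_of_length_le (g : G) {w : List G} {n : ℕ} (hn : w.length ≤ n) (t : ℕ) :
    pathAt g w (min t n) = pathAt g w t := by
  rcases le_total t n with h | h
  · rw [min_eq_left h]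
  · rw [min_eq_right h, pathAt_of_length_le g hn, pathAt_of_length_le g (hn.trans h)]

variable (X : Set G)

theorem wdist_pathAt_le_sub {w : List G} (hw : IsWord X w) (g : G) {s t : ℕ} (hst : s ≤ t) :
    wdist X (pathAt g w s) (pathAt g w t) ≤ t - s := by
  obtain ⟨r, rfl⟩ := Nat.exists_eq_add_of_le hst
  rw [pathAt_add]
  refine (wdist_le_length X ((hw.drop X s).take X r) rfl).trans ?_
  simp

theorem wdist_pathAt_le (hgen : Subgroup.closure X = ⊤) {w : List G} (hw : IsWord X w)
    (g : G) (s t : ℕ) : wdist X (pathAt g w s) (pathAt g w t) ≤ t - s + (s - t) := by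
  rcases le_total s t with h | h
  · have := wdist_pathAt_le_sub X hw g h; omega
  · have := wdist_pathAt_le_sub X hw g h; rw [wdist_comm X hgen] at this; omega

end Paths

theorem exists_exact_rise {f : ℕ → ℤ} (hf : ∀ t, f (t + 1) ≤ f t + 1) {J s t : ℕ}
    (hst : s ≤ t) (hrise : f s + J ≤ f t) :
    ∃ c t', c ≤ t' ∧ t' ≤ t ∧ f t' = f c + J ∧
      ∀ i, c ≤ i → i ≤ t' → f c ≤ f i ∧ f i ≤ f c + J := by
  classical
  have hex : ∃ t', t' ≤ t ∧ ∃ s ≤ t', f s + J ≤ f t' := ⟨t, le_rfl, s, hst, hrise⟩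
  obtain ⟨t', ⟨ht't, s₀, hs₀, hs₀rise⟩, hfirst⟩ :
      ∃ t', (t' ≤ t ∧ ∃ s ≤ t', f s + J ≤ f t') ∧ ∀ i < t', ¬(i ≤ t ∧ ∃ s ≤ i, f s + J ≤ f i) :=
    ⟨Nat.find hex, Nat.find_spec hex, fun i => Nat.find_min hex⟩
  have hbefore : ∀ i < t', ∀ s ≤ i, f i < f s + J := fun i hi s hs =>
    lt_of_not_ge fun h => hfirst i hi ⟨by omega, s, hs, h⟩
  obtain ⟨c, hc, hcmin⟩ := (Finset.range (t' + 1)).exists_min_image f ⟨0, by simp⟩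
  have hct' : c ≤ t' := Nat.lt_succ_iff.1 (Finset.mem_range.1 hc)
  have hmin : ∀ i ≤ t', f c ≤ f i := fun i hi => hcmin i (Finset.mem_range.2 (by omega))
  have hend : f t' = f c + J := by
    have := hmin s₀ hs₀
    rcases hct'.lt_or_eq with hlt | rfl
    · have h1 := hbefore (t' - 1) (by omega) c (by omega)
      have h2 := hf (t' - 1)
      rw [Nat.sub_add_cancel (by omega)] at h2
      omega
    · omega
  refine ⟨c, t', hct', ht't, hend, fun i hci hit => ⟨hmin i hit, ?_⟩⟩
  rcases hit.lt_or_eq with hlt | rfl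
  · exact (hbefore i hlt c hci).le
  · exact hend.le

theorem length_splice {α : Type*} {w : List α} (r : List α) {c t' : ℕ} (hct' : c ≤ t')
    (ht' : t' ≤ w.length) :
    (w.take c ++ r ++ w.drop t').length = c + r.length + (w.length - t') := by
  simp only [List.length_append, List.length_take, List.length_drop]
  omega

section Splice

variable (X : Set G) {g : G} {w r : List G} {c t' : ℕ}

theorem prod_splice (hconn : pathAt g w c * r.prod = pathAt g w t') :
    (w.take c ++ r ++ w.drop t').prod = w.prod := by
  rw [pathAt, pathAt, mul_assoc, mul_right_inj] at hconn
  rw [List.prod_append, List.prod_append, hconn, ← List.prod_append, List.take_append_drop]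

theorem syncFellow_splice (hw : IsWord X w) (hct' : c ≤ t') (ht' : t' ≤ w.length)
    (hr : r.length ≤ t' - c) {K : ℕ} (hK : t' - c - r.length ≤ K)
    (hconn : pathAt g w c * r.prod = pathAt g w t')
    (hnear : ∀ i ≤ r.length, wdist X (pathAt g w (c + i)) (pathAt (pathAt g w c) r i) ≤ K) :
    SyncFellow X K g w g (w.take c ++ r ++ w.drop t') := by
  intro t
  have hc : (w.take c).length = c := by simp only [List.length_take]; omega
  have hhead : c ≤ t → pathAt g (w.take c) t = pathAt g w c := fun h => by
    rw [pathAt_of_length_le g (hc.le.trans h)]; rfl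
  rw [pathAt_append, pathAt_append, List.length_append, hc]
  rcases le_or_gt t c with htc | hct
  · rw [pathAt_take g w htc, Nat.sub_eq_zero_of_le htc, pathAt_zero,
      Nat.sub_eq_zero_of_le (by omega : t ≤ c + r.length), pathAt_zero, wdist_self]
    exact Nat.zero_le K
  rcases le_or_gt t (c + r.length) with htr | hrt
  · rw [hhead hct.le, Nat.sub_eq_zero_of_le htr, pathAt_zero]
    simpa [Nat.add_sub_cancel' hct.le] using hnear (t - c) (by omega)
  · rw [hhead hct.le, pathAt_of_length_le _ (by omega : r.length ≤ t - c), hconn,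
      ← pathAt_add]
    exact (wdist_pathAt_le_sub X hw g (by omega)).trans (by omega)

end Splice

section Shortcut

variable (X : Set G) {g h : G} {w u β₁ β₂ : List G} {k c t' : ℕ} {ψ : ℕ → ℕ}

theorem wdist_pathAt_shortcut_le (hgen : Subgroup.closure X = ⊤) (hw : IsWord X w)
    (hu : IsWord X u) (hψm : Monotone ψ) (hψ : ∀ t, wdist X (pathAt g w t) (pathAt h u (ψ t)) ≤ k)
    (hwin : ∀ i, c ≤ i → i ≤ t' → ψ i + c ≤ i + ψ c ∧ i + ψ c ≤ c + ψ i + (2 * k + 1))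
    (hβ₁ : IsWord X β₁) (hβ₁k : β₁.length ≤ k) (hβ₁e : pathAt g w c * β₁.prod = pathAt h u (ψ c))
    (hβ₂ : IsWord X β₂) (hβ₂k : β₂.length ≤ k)
    (hseg : ((u.drop (ψ c)).take (ψ t' - ψ c)).length = ψ t' - ψ c)
    {i : ℕ} (hi : i ≤ β₁.length + (ψ t' - ψ c) + β₂.length) (hit' : c + i ≤ t') :
    wdist X (pathAt g w (c + i))
      (pathAt (pathAt g w c) (β₁ ++ (u.drop (ψ c)).take (ψ t' - ψ c) ++ β₂) i) ≤ 4 * k + 1 := by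
  set a := ψ t' - ψ c
  have hstep := wdist_pathAt_le X hgen hw g
  have htri := wdist_triangle X hgen
  rw [pathAt_append, pathAt_append, List.length_append, hseg]
  rcases le_or_gt i β₁.length with hi₁ | hi₁
  · rw [Nat.sub_eq_zero_of_le hi₁, pathAt_zero,
      Nat.sub_eq_zero_of_le (by omega : i ≤ β₁.length + a), pathAt_zero]
    have hβ := wdist_pathAt_le_sub X hβ₁ (pathAt g w c) (Nat.zero_le i)
    rw [pathAt_zero] at hβ
    have := hstep (c + i) c
    have := htri (pathAt g w (c + i)) (pathAt g w c) (pathAt (pathAt g w c) β₁ i)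
    omega
  rw [pathAt_of_length_le _ hi₁.le, hβ₁e]
  rcases le_or_gt i (β₁.length + a) with hi₂ | hi₂
  · rw [Nat.sub_eq_zero_of_le hi₂, pathAt_zero, pathAt_take _ _ (by omega), ← pathAt_add]
    have := hwin (c + i) (by omega) hit'
    have := wdist_pathAt_le X hgen hu h (ψ (c + i)) (ψ c + (i - β₁.length))
    have := hψ (c + i)
    have := htri (pathAt g w (c + i)) (pathAt h u (ψ (c + i)))
      (pathAt h u (ψ c + (i - β₁.length)))
    omega
  · rw [← pathAt_min_of_length_le _ hseg.le, min_eq_right (by omega), pathAt_take _ _ le_rfl,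
      ← pathAt_add, Nat.add_sub_cancel' (hψm (by omega : c ≤ t'))]
    have hβ := wdist_pathAt_le_sub X hβ₂ (pathAt h u (ψ t')) (Nat.zero_le (i - (β₁.length + a)))
    rw [pathAt_zero] at hβ
    have := hwin t' (by omega) le_rfl
    have := hstep (c + i) t'
    have := hψ t'
    have := htri (pathAt g w (c + i)) (pathAt g w t') (pathAt h u (ψ t'))
    have := htri (pathAt g w (c + i)) (pathAt h u (ψ t'))
      (pathAt (pathAt h u (ψ t')) β₂ (i - (β₁.length + a)))
    omega

theorem exists_shorter_syncFellow_of_rise (hgen : Subgroup.closure X = ⊤) (hw : IsWord X w)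
    (hwl : IsLoop w) (hu : IsWord X u) (hψm : Monotone ψ) (hψu : ∀ t, ψ t ≤ u.length)
    (hψ : ∀ t, wdist X (pathAt g w t) (pathAt h u (ψ t)) ≤ k) (hct' : c ≤ t')
    (ht' : t' ≤ w.length) (hrise : c + ψ t' + (2 * k + 1) ≤ t' + ψ c)
    (hwin : ∀ i, c ≤ i → i ≤ t' → ψ i + c ≤ i + ψ c ∧ i + ψ c ≤ c + ψ i + (2 * k + 1)) :
    ∃ v : List G, IsWord X v ∧ IsLoop v ∧ v.length < w.length ∧
      SyncFellow X (4 * k + 1) g w g v := by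
  have hψct' := hψm hct'
  have hlag := hwin t' hct' le_rfl
  obtain ⟨β₁, hβ₁, hβ₁len, hβ₁e⟩ :=
    exists_isWord_length_eq_wdist X hgen (pathAt g w c) (pathAt h u (ψ c))
  obtain ⟨β₂, hβ₂, hβ₂len, hβ₂e⟩ :=
    exists_isWord_length_eq_wdist X hgen (pathAt h u (ψ t')) (pathAt g w t')
  have hβ₁k : β₁.length ≤ k := hβ₁len ▸ hψ c
  have hβ₂k : β₂.length ≤ k := hβ₂len ▸ wdist_comm X hgen _ _ ▸ hψ t'
  set seg := (u.drop (ψ c)).take (ψ t' - ψ c)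
  have hseglen : seg.length = ψ t' - ψ c := by
    have := hψu t'
    simp only [seg, List.length_take, List.length_drop]
    omega
  have hsege : pathAt h u (ψ c) * seg.prod = pathAt h u (ψ t') := by
    rw [← pathAt, ← pathAt_add, Nat.add_sub_cancel' hψct']
  have hconn : pathAt g w c * (β₁ ++ seg ++ β₂).prod = pathAt g w t' := by
    simp only [List.prod_append, ← mul_assoc, hβ₁e, hsege, hβ₂e]
  have hrlen : (β₁ ++ seg ++ β₂).length = β₁.length + (ψ t' - ψ c) + β₂.length := by
    simp only [List.length_append, hseglen]
  refine ⟨w.take c ++ (β₁ ++ seg ++ β₂) ++ w.drop t', ?_, ?_, ?_, ?_⟩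
  · exact ((hw.take X c).append X ((hβ₁.append X ((hu.drop X _).take X _)).append X hβ₂)).append X
      (hw.drop X t')
  · exact (prod_splice hconn).trans hwl
  · rw [length_splice _ hct' ht']
    omega
  · refine syncFellow_splice X hw hct' ht' (by omega) (by omega) hconn fun i hi => ?_
    exact wdist_pathAt_shortcut_le X hgen hw hu hψm hψ hwin hβ₁ hβ₁k hβ₁e hβ₂ hβ₂k hseglen
      (by omega) (by omega)

end Shortcut

section FellowTravel

variable (X : Set G) {g h : G} {w u : List G} {k : ℕ}

theorem SyncFellow.mono {K : ℕ} (hf : SyncFellow X k g w h u) (hkK : k ≤ K) :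
    SyncFellow X K g w h u :=
  fun t => (hf t).trans hkK

theorem SyncFellow.asyncFellow (hf : SyncFellow X k g w h u) : AsyncFellow X k g w h u :=
  ⟨id, monotone_id, fun m => ⟨m, le_rfl⟩, hf⟩

variable {X} in
theorem AsyncFellow.exists_reparam_le_length (hf : AsyncFellow X k g w h u) :
    ∃ ψ : ℕ → ℕ, Monotone ψ ∧ (∀ t, ψ t ≤ u.length) ∧
      ∀ t, wdist X (pathAt g w t) (pathAt h u (ψ t)) ≤ k := by
  obtain ⟨φ, hφm, -, hφ⟩ := hf
  refine ⟨fun t => min (φ t) u.length, fun a b hab => min_le_min_right _ (hφm hab),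
    fun t => min_le_right _ _, fun t => ?_⟩
  rw [pathAt_min_of_length_le h le_rfl]
  exact hφ t

theorem syncFellow_of_forall_lag_lt (hgen : Subgroup.closure X = ⊤) (hu : IsWord X u)
    (hlen : u.length < w.length) {ψ : ℕ → ℕ} (hψu : ∀ t, ψ t ≤ u.length)
    (hψ : ∀ t, wdist X (pathAt g w t) (pathAt h u (ψ t)) ≤ k) {J : ℕ}
    (hlag : ∀ s t, s ≤ t → t ≤ w.length → t + ψ s < s + ψ t + J) :
    SyncFellow X (k + J) g w h u := by
  intro t
  rw [← pathAt_min_of_length_le g (le_refl w.length), ← pathAt_min_of_length_le h hlen.le]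
  set t₀ := min t w.length
  have := hlag t₀ w.length (min_le_right _ _) le_rfl
  have := hlag 0 t₀ (Nat.zero_le _) (min_le_right _ _)
  have := hψu w.length
  have := hψ t₀
  have := wdist_pathAt_le X hgen hu h (ψ t₀) t₀
  have := wdist_triangle X hgen (pathAt g w t₀) (pathAt h u (ψ t₀)) (pathAt h u t₀)
  omega

theorem AsyncFellow.exists_shorter_syncFellow (hgen : Subgroup.closure X = ⊤)
    (hw : IsWord X w) (hwl : IsLoop w) (hu : IsWord X u) (hul : IsLoop u)
    (hlen : u.length < w.length) (hf : AsyncFellow X k g w h u) :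
    ∃ (h' : G) (v : List G), IsWord X v ∧ IsLoop v ∧ v.length < w.length ∧
      SyncFellow X (4 * k + 1) g w h' v := by
  obtain ⟨ψ, hψm, hψu, hψ⟩ := hf.exists_reparam_le_length
  by_cases hrise : ∃ s t, s ≤ t ∧ t ≤ w.length ∧ s + ψ t + (2 * k + 1) ≤ t + ψ s
  · obtain ⟨s, t, hst, htw, hst'⟩ := hrise
    obtain ⟨c, t', hct', ht't, hend, hwin⟩ :=
      exists_exact_rise (f := fun t => (t : ℤ) - ψ t) (J := 2 * k + 1)
        (fun t => by have := hψm (Nat.le_add_right t 1); push_cast; omega) hst (by push_cast; omega)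
    obtain ⟨v, hv⟩ := exists_shorter_syncFellow_of_rise X hgen hw hwl hu hψm hψu hψ hct'
      (ht't.trans htw) (by omega) fun i hci hit => by have := hwin i hci hit; omega
    exact ⟨g, v, hv⟩
  · push Not at hrise
    exact ⟨h, u, hu, hul, hlen, (syncFellow_of_forall_lag_lt X hgen hu hlen hψu hψ
      hrise).mono X (by omega)⟩

end FellowTravel

theorem asyncLSP_iff_syncLSP_general {G : Type*} [Group G] (X : Set G)
    (hgen : Subgroup.closure X = ⊤) :
    AsyncLSP X ↔ SyncLSP X := by
  constructor
  · rintro ⟨k, -, H⟩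
    refine ⟨4 * k + 1, by omega, fun g w hw hwl hne => ?_⟩
    obtain ⟨h, u, hu, hul, hlen, hf⟩ := H g w hw hwl hne
    exact hf.exists_shorter_syncFellow X hgen hw hwl hu hul hlen
  · rintro ⟨k, hk, H⟩
    refine ⟨k, hk, fun g w hw hwl hne => ?_⟩
    obtain ⟨h, u, hu, hul, hlen, hf⟩ := H g w hw hwl hne
    exact ⟨h, u, hu, hul, hlen, hf.asyncFellow X⟩

/-- For a group `G` with finite generating set `X`, the asynchronous loop shortening
property holds if and only if the synchronous loop shortening property holds. -/
theorem asyncLSP_iff_syncLSP {G : Type*} [Group G] (X : Set G) (hfin : X.Finite)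
    (hgen : Subgroup.closure X = ⊤) :
    AsyncLSP X ↔ SyncLSP X :=
  asyncLSP_iff_syncLSP_general X hgen

end LoopShortening
end

section
/- Let G be a group with a finite generating set X having the loop shortening property with constant k > 0. Then G is finitely presented; in fact G admits the finite presentation ⟨X | R⟩ where R is the (finite) set of all words r over X ∪ X⁻¹ with |r| ≤ 2k+2 that represent the identity of G. -/
/-! Basic notions for a group `G` with a generating set `X`:
words over `X ∪ X⁻¹`, the word metric, paths, loops and fellow traveling. -/

namespace LoopShortening

variable {G : Type*} [Group G]

/-! Given a loop `w`, the loop shortening property provides a shorter loop `u` and rungs of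
length at most `k` joining `w(t)` to `u(t)`. Consecutive rungs together with the letters of `w`
and `u` between them bound squares of length at most `2k+2`, and the first and last rungs both
join `1` to the basepoint of `u`, so together they form a relator of length at most `2k`.
Hence, modulo the normal closure of the short relators, `w` is conjugate to `u`, and induction on
the length shows that every word representing `1` lies in that normal closure. -/

section FreeGroupWords

variable {α H : Type*} [Group H]

def wordOf (f : α → G) (l : List (α × Bool)) : List G :=
  l.map fun x => cond x.2 (f x.1) (f x.1)⁻¹

@[simp]
theorem length_wordOf (f : α → G) (l : List (α × Bool)) : (wordOf f l).length = l.length :=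
  List.length_map _

theorem prod_wordOf (f : α → G) (l : List (α × Bool)) :
    (wordOf f l).prod = FreeGroup.lift f (.mk l) :=
  FreeGroup.lift_mk.symm

theorem pathAt_wordOf (f : α → G) (g₀ : G) (l : List (α × Bool)) (t : ℕ) :
    pathAt g₀ (wordOf f l) t = g₀ * FreeGroup.lift f (.mk (l.take t)) := by
  rw [pathAt, wordOf, ← List.map_take, ← wordOf, prod_wordOf]

-- `P t` is a rung joining the prefixes of length `t` of `l` and `l'`: the ladder closes up at
-- every height iff each square between consecutive rungs does.
theorem ladder_iff (ψ : FreeGroup α →* H) (l l' : List (α × Bool)) (P : ℕ → List (α × Bool)) :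
    (∀ t, ψ (.mk (l.take t)) * ψ (.mk (P t)) = ψ (.mk (P 0)) * ψ (.mk (l'.take t))) ↔
      ∀ t, ψ (.mk l[t]?.toList) * ψ (.mk (P (t + 1))) =
        ψ (.mk (P t)) * ψ (.mk l'[t]?.toList) := by
  have hstep (l : List (α × Bool)) (t : ℕ) :
      ψ (.mk (l.take (t + 1))) = ψ (.mk (l.take t)) * ψ (.mk l[t]?.toList) := by
    rw [List.take_add_one, ← FreeGroup.mul_mk, map_mul]
  constructor
  · intro h t
    have h' := h (t + 1)
    rw [hstep, hstep, ← mul_assoc (ψ _), ← h t, mul_assoc, mul_assoc] at h'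
    exact mul_left_cancel h'
  · intro h t
    induction t with
    | zero => simp [← FreeGroup.one_eq_mk]
    | succ t ih => rw [hstep, hstep, mul_assoc, h, ← mul_assoc, ih, mul_assoc]

def shortRelators (f : α → G) (n : ℕ) : Set (FreeGroup α) :=
  {r | FreeGroup.lift f r = 1 ∧ ∃ l : List (α × Bool), l.length ≤ n ∧ FreeGroup.mk l = r}

theorem shortRelators_finite [Finite α] (f : α → G) (n : ℕ) : (shortRelators f n).Finite :=
  ((List.finite_length_le (α × Bool) n).image FreeGroup.mk).subset
    fun _ ⟨_, l, hl, hr⟩ => ⟨l, hl, hr⟩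

theorem map_mk_eq_of_lift_mk_eq {f : α → G} {n : ℕ} {ψ : FreeGroup α →* H}
    (hψ : shortRelators f n ⊆ ψ.ker) {p q : List (α × Bool)} (hpq : p.length + q.length ≤ n)
    (h : FreeGroup.lift f (.mk p) = FreeGroup.lift f (.mk q)) : ψ (.mk p) = ψ (.mk q) := by
  have hmk : FreeGroup.mk (p ++ FreeGroup.invRev q) = .mk p * (.mk q)⁻¹ := by
    rw [FreeGroup.inv_mk, FreeGroup.mul_mk]
  have hr : FreeGroup.mk (p ++ FreeGroup.invRev q) ∈ ψ.ker :=
    hψ ⟨by rw [hmk, map_mul, map_inv, h, mul_inv_cancel],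
      _, by rwa [List.length_append, FreeGroup.invRev_length], rfl⟩
  rwa [MonoidHom.mem_ker, hmk, map_mul, map_inv, mul_inv_eq_one] at hr

theorem isConj_map_mk_of_rungs {f : α → G} {k : ℕ} {ψ : FreeGroup α →* H}
    (hψ : shortRelators f (2 * k + 2) ⊆ ψ.ker) {l l' : List (α × Bool)}
    (hlen : l'.length ≤ l.length) (hl : FreeGroup.lift f (.mk l) = 1)
    (hl' : FreeGroup.lift f (.mk l') = 1) (P : ℕ → List (α × Bool)) (hPlen : ∀ t, (P t).length ≤ k)
    (hP : ∀ t, FreeGroup.lift f (.mk (l.take t)) * FreeGroup.lift f (.mk (P t)) =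
      FreeGroup.lift f (.mk (P 0)) * FreeGroup.lift f (.mk (l'.take t))) :
    IsConj (ψ (.mk l')) (ψ (.mk l)) := by
  have hsquare (t : ℕ) : ψ (.mk l[t]?.toList) * ψ (.mk (P (t + 1))) =
      ψ (.mk (P t)) * ψ (.mk l'[t]?.toList) := by
    have hlift := (ladder_iff (FreeGroup.lift f) l l' P).1 hP t
    have h₁ : l[t]?.toList.length ≤ 1 := by cases l[t]? <;> simp
    have h₂ : l'[t]?.toList.length ≤ 1 := by cases l'[t]? <;> simp
    have := hPlen t
    have := hPlen (t + 1)
    simpa only [← FreeGroup.mul_mk, map_mul] using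
      map_mk_eq_of_lift_mk_eq hψ (p := l[t]?.toList ++ P (t + 1)) (q := P t ++ l'[t]?.toList)
        (by simp only [List.length_append]; omega) (by simpa only [← FreeGroup.mul_mk, map_mul])
  have hends := (ladder_iff ψ l l' P).2 hsquare l.length
  have hlift := hP l.length
  rw [List.take_length, List.take_of_length_le hlen] at hends hlift
  rw [hl, hl', one_mul, mul_one] at hlift
  have := hPlen 0
  have := hPlen l.length
  rw [map_mk_eq_of_lift_mk_eq hψ (by omega) hlift] at hends
  exact isConj_iff.2 ⟨ψ (.mk (P 0)), by rw [← hends, mul_inv_cancel_right]⟩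

end FreeGroupWords

def HasLoopShortening (X : Set G) (k : ℕ) : Prop :=
  ∀ (g₀ : G) (w : List G), IsWord X w → IsLoop w → w ≠ [] →
    ∃ (h₀ : G) (u : List G), IsWord X u ∧ IsLoop u ∧ u.length < w.length ∧
      SyncFellow X k g₀ w h₀ u

section Presentation

variable {X : Set G} {k : ℕ} {H : Type*} [Group H]

theorem isWord_wordOf (l : List (X × Bool)) : IsWord X (wordOf ((↑) : X → G) l) := by
  simp only [IsWord, wordOf, List.mem_map]
  rintro _ ⟨⟨x, _ | _⟩, -, rfl⟩ <;> simp

theorem exists_wordOf_eq : ∀ {w : List G}, IsWord X w → ∃ l, wordOf ((↑) : X → G) l = w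
  | [], _ => ⟨[], rfl⟩
  | g :: w, hw => by
    obtain ⟨l, rfl⟩ := exists_wordOf_eq fun x hx => hw x (List.mem_cons_of_mem g hx)
    rcases hw g List.mem_cons_self with hg | hg
    · exact ⟨(⟨g, hg⟩, true) :: l, rfl⟩
    · exact ⟨(⟨g⁻¹, hg⟩, false) :: l, by simp [wordOf]⟩

theorem lift_surjective_of_closure_eq_top (hgen : Subgroup.closure X = ⊤) :
    Function.Surjective (FreeGroup.lift ((↑) : X → G)) :=
  FreeGroup.lift_surjective_iff_closure_range_eq_top.2 (by rwa [Subtype.range_coe])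

theorem exists_lift_mk_eq_of_wdist_le (hgen : Subgroup.closure X = ⊤) {g h : G}
    {m : ℕ} (hgh : wdist X g h ≤ m) :
    ∃ l : List (X × Bool), l.length ≤ m ∧ FreeGroup.lift ((↑) : X → G) (.mk l) = g⁻¹ * h := by
  classical
  obtain ⟨r, hr⟩ := lift_surjective_of_closure_eq_top hgen (g⁻¹ * h)
  have hne : {n | ∃ w : List G, IsWord X w ∧ w.length = n ∧ g * w.prod = h}.Nonempty :=
    ⟨_, _, isWord_wordOf r.toWord, rfl, by
      rw [prod_wordOf, FreeGroup.mk_toWord, hr, mul_inv_cancel_left]⟩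
  obtain ⟨w, hw, hlen, hprod⟩ := Nat.sInf_mem hne
  obtain ⟨l, rfl⟩ := exists_wordOf_eq hw
  refine ⟨l, ?_, ?_⟩
  · rw [← length_wordOf ((↑) : X → G) l, hlen]
    exact hgh
  · rw [← prod_wordOf, ← hprod, inv_mul_cancel_left]

theorem map_mk_eq_one_of_lift_mk_eq_one (hgen : Subgroup.closure X = ⊤)
    (hLSP : HasLoopShortening X k) {ψ : FreeGroup X →* H}
    (hψ : shortRelators ((↑) : X → G) (2 * k + 2) ⊆ ψ.ker) (l : List (X × Bool))
    (hl : FreeGroup.lift ((↑) : X → G) (.mk l) = 1) : ψ (.mk l) = 1 := by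
  rcases eq_or_ne l [] with rfl | hne
  · rw [← FreeGroup.one_eq_mk, map_one]
  obtain ⟨h₀, u, hu, hu1, hlen, hfellow⟩ := hLSP 1 (wordOf (↑) l) (isWord_wordOf l)
    (by rwa [IsLoop, prod_wordOf]) (by simpa [wordOf] using hne)
  obtain ⟨l', rfl⟩ := exists_wordOf_eq hu
  choose P hPlen hP using fun t => exists_lift_mk_eq_of_wdist_le hgen (hfellow t)
  simp only [pathAt_wordOf, length_wordOf] at hP hlen
  have hl' : FreeGroup.lift ((↑) : X → G) (.mk l') = 1 := by rwa [IsLoop, prod_wordOf] at hu1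
  have ih := map_mk_eq_one_of_lift_mk_eq_one hgen hLSP hψ l' hl'
  refine isConj_one_right.1 (ih ▸ isConj_map_mk_of_rungs hψ hlen.le hl hl' P hPlen fun t => ?_)
  rw [hP, hP 0]
  simp only [List.take_zero, ← FreeGroup.one_eq_mk, map_one, one_mul, mul_one, inv_one,
    mul_inv_cancel_left]
termination_by l.length
decreasing_by simpa only [length_wordOf] using hlen

theorem ker_lift_le_ker (hgen : Subgroup.closure X = ⊤) (hLSP : HasLoopShortening X k)
    {ψ : FreeGroup X →* H} (hψ : shortRelators ((↑) : X → G) (2 * k + 2) ⊆ ψ.ker) :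
    (FreeGroup.lift ((↑) : X → G)).ker ≤ ψ.ker := by
  classical
  intro r hr
  rw [MonoidHom.mem_ker, ← FreeGroup.mk_toWord (x := r)] at hr ⊢
  exact map_mk_eq_one_of_lift_mk_eq_one hgen hLSP hψ _ hr

end Presentation

theorem loopShortening_finitely_presented_general {G : Type*} [Group G] (X : Set G)
    (hfin : X.Finite) (hgen : Subgroup.closure X = ⊤) (k : ℕ)
    -- `(G,X)` has the loop shortening property with constant `k`:
    (hLSP : ∀ (g₀ : G) (w : List G), IsWord X w → IsLoop w → w ≠ [] →
      ∃ (h₀ : G) (u : List G), IsWord X u ∧ IsLoop u ∧ u.length < w.length ∧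
        SyncFellow X k g₀ w h₀ u) :
    -- the evaluation homomorphism from the free group on `X` to `G`
    -- is surjective with kernel the normal closure of the finite relator set `R`
    Set.Finite {r : FreeGroup X |
        FreeGroup.lift (fun x : X => (x : G)) r = 1 ∧
        ∃ l : List (X × Bool), l.length ≤ 2 * k + 2 ∧ FreeGroup.mk l = r} ∧
    Function.Surjective (FreeGroup.lift (fun x : X => (x : G))) ∧
    MonoidHom.ker (FreeGroup.lift (fun x : X => (x : G))) =
      Subgroup.normalClosure {r : FreeGroup X |
        FreeGroup.lift (fun x : X => (x : G)) r = 1 ∧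
        ∃ l : List (X × Bool), l.length ≤ 2 * k + 2 ∧ FreeGroup.mk l = r} := by
  have : Finite X := hfin.to_subtype
  refine ⟨shortRelators_finite _ _, lift_surjective_of_closure_eq_top hgen, le_antisymm ?_ ?_⟩
  · simpa only [QuotientGroup.ker_mk'] using ker_lift_le_ker hgen hLSP
      (ψ := QuotientGroup.mk' (Subgroup.normalClosure _))
      (by rw [QuotientGroup.ker_mk']; exact Subgroup.subset_normalClosure)
  · exact Subgroup.normalClosure_le_normal fun r hr => hr.1

/-- If `(G,X)` has the loop shortening property with constant `k > 0`, then `G` is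
finitely presented; in fact `G` admits the finite presentation `⟨X | R⟩` where `R` is
the (finite) set of all elements of the free group on `X` given by words over
`X ∪ X⁻¹` of length at most `2k+2` which represent the identity of `G`. -/
theorem loopShortening_finitely_presented {G : Type*} [Group G] (X : Set G)
    (hfin : X.Finite) (hgen : Subgroup.closure X = ⊤) (k : ℕ) (hk : 0 < k)
    -- `(G,X)` has the loop shortening property with constant `k`:
    (hLSP : ∀ (g₀ : G) (w : List G), IsWord X w → IsLoop w → w ≠ [] →
      ∃ (h₀ : G) (u : List G), IsWord X u ∧ IsLoop u ∧ u.length < w.length ∧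
        SyncFellow X k g₀ w h₀ u) :
    -- the evaluation homomorphism from the free group on `X` to `G`
    -- is surjective with kernel the normal closure of the finite relator set `R`
    Set.Finite {r : FreeGroup X |
        FreeGroup.lift (fun x : X => (x : G)) r = 1 ∧
        ∃ l : List (X × Bool), l.length ≤ 2 * k + 2 ∧ FreeGroup.mk l = r} ∧
    Function.Surjective (FreeGroup.lift (fun x : X => (x : G))) ∧
    MonoidHom.ker (FreeGroup.lift (fun x : X => (x : G))) =
      Subgroup.normalClosure {r : FreeGroup X |
        FreeGroup.lift (fun x : X => (x : G)) r = 1 ∧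
        ∃ l : List (X × Bool), l.length ≤ 2 * k + 2 ∧ FreeGroup.mk l = r} :=
  loopShortening_finitely_presented_general X hfin hgen k hLSP

end LoopShortening
end

section
/- Let G_W be the group with presentation ⟨a,b,c,d,s,t | c=ab, c=ba, d=c², s⁻¹as=d, t⁻¹bt=d⟩ and generating set X = {a,b,c,d,s,t}. Then (G_W,X) has the basepoint loop shortening property. -/
/-! Basic notions for a group `G` with a generating set `X`:
words over `X ∪ X⁻¹`, the word metric, paths, loops and fellow traveling. -/

namespace LoopShortening

variable {G : Type*} [Group G]

/-- `(G,X)` has the (synchronous) basepoint loop shortening property. -/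
def BasepointLSP (X : Set G) : Prop :=
  ∃ k : ℕ, 0 < k ∧ ∀ (g₀ : G) (w : List G), IsWord X w → IsLoop w → w ≠ [] →
    ∃ u : List G, IsWord X u ∧ IsLoop u ∧ u.length < w.length ∧
      SyncFellow X k g₀ w g₀ u
/-- The relators of Wise's group
`G_W = ⟨a,b,c,d,s,t | c=ab, c=ba, d=c², s⁻¹as=d, t⁻¹bt=d⟩`,
with generators indexed `0=a, 1=b, 2=c, 3=d, 4=s, 5=t`. -/
def wiseRels : Set (FreeGroup (Fin 6)) :=
  { FreeGroup.of 0 * FreeGroup.of 1 * (FreeGroup.of 2)⁻¹,               -- c = ab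
    FreeGroup.of 1 * FreeGroup.of 0 * (FreeGroup.of 2)⁻¹,               -- c = ba
    FreeGroup.of 2 * FreeGroup.of 2 * (FreeGroup.of 3)⁻¹,               -- d = c²
    (FreeGroup.of 4)⁻¹ * FreeGroup.of 0 * FreeGroup.of 4 * (FreeGroup.of 3)⁻¹,  -- s⁻¹as = d
    (FreeGroup.of 5)⁻¹ * FreeGroup.of 1 * FreeGroup.of 5 * (FreeGroup.of 3)⁻¹ } -- t⁻¹bt = d

/-- Wise's group `G_W`. -/
abbrev GW := PresentedGroup wiseRels

/-- The generating set `X = {a,b,c,d,s,t}` of `G_W`. -/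
def XW : Set GW := Set.range (PresentedGroup.of (rels := wiseRels))

namespace GWAux

/-- letters -/
abbrev L := Fin 6 × Bool

noncomputable def γ : Fin 6 → GW := PresentedGroup.of

noncomputable def ev (l : L) : GW := if l.2 then γ l.1 else (γ l.1)⁻¹

noncomputable def evW (w : List L) : GW := (w.map ev).prod

lemma evW_nil : evW [] = 1 := rfl

lemma evW_append (u v : List L) : evW (u ++ v) = evW u * evW v := by
  simp [evW]

lemma evW_cons (l : L) (v : List L) : evW (l :: v) = ev l * evW v := by
  simp [evW]

lemma mk_rel {r : FreeGroup (Fin 6)} (h : r ∈ wiseRels) :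
    PresentedGroup.mk wiseRels r = 1 := by
  change QuotientGroup.mk r = 1
  refine (QuotientGroup.eq_one_iff r).2 ?_
  exact Subgroup.subset_normalClosure h

lemma mk_of (i : Fin 6) : PresentedGroup.mk wiseRels (FreeGroup.of i) = γ i := rfl

lemma rel1 : γ 0 * γ 1 = γ 2 := by
  have h := mk_rel (show (FreeGroup.of 0 * FreeGroup.of 1 * (FreeGroup.of 2)⁻¹) ∈ wiseRels by
    simp [wiseRels])
  simp only [map_mul, map_inv, mk_of] at h
  rw [mul_inv_eq_one] at h
  exact h

lemma rel2 : γ 1 * γ 0 = γ 2 := by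
  have h := mk_rel (show (FreeGroup.of 1 * FreeGroup.of 0 * (FreeGroup.of 2)⁻¹) ∈ wiseRels by
    simp [wiseRels])
  simp only [map_mul, map_inv, mk_of] at h
  rw [mul_inv_eq_one] at h
  exact h

lemma rel3 : γ 2 * γ 2 = γ 3 := by
  have h := mk_rel (show (FreeGroup.of 2 * FreeGroup.of 2 * (FreeGroup.of 3)⁻¹) ∈ wiseRels by
    simp [wiseRels])
  simp only [map_mul, map_inv, mk_of] at h
  rw [mul_inv_eq_one] at h
  exact h

lemma rel4 : (γ 4)⁻¹ * γ 0 * γ 4 = γ 3 := by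
  have h := mk_rel (show ((FreeGroup.of 4)⁻¹ * FreeGroup.of 0 * FreeGroup.of 4 *
      (FreeGroup.of 3)⁻¹) ∈ wiseRels by simp [wiseRels])
  simp only [map_mul, map_inv, mk_of] at h
  rw [mul_inv_eq_one] at h
  exact h

lemma rel5 : (γ 5)⁻¹ * γ 1 * γ 5 = γ 3 := by
  have h := mk_rel (show ((FreeGroup.of 5)⁻¹ * FreeGroup.of 1 * FreeGroup.of 5 *
      (FreeGroup.of 3)⁻¹) ∈ wiseRels by simp [wiseRels])
  simp only [map_mul, map_inv, mk_of] at h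
  rw [mul_inv_eq_one] at h
  exact h

lemma comm_ab : Commute (γ 0) (γ 1) := by
  unfold Commute SemiconjBy
  rw [rel1, rel2]

/-- the `ℤ²` subgroup evaluation -/
noncomputable def ι (v : ℤ × ℤ) : GW := γ 0 ^ v.1 * γ 1 ^ v.2

lemma ι_add (v w : ℤ × ℤ) : ι (v + w) = ι v * ι w := by
  have h : Commute (γ 0 ^ w.1) (γ 1 ^ v.2) := (comm_ab.symm.zpow_zpow _ _).symm
  simp only [ι, Prod.fst_add, Prod.snd_add, zpow_add]
  rw [mul_assoc, mul_assoc, ← mul_assoc (γ 0 ^ w.1), h.eq, mul_assoc]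

lemma ι_zero : ι 0 = 1 := by simp [ι]

lemma ι_neg (v : ℤ × ℤ) : ι (-v) = (ι v)⁻¹ := by
  rw [eq_inv_iff_mul_eq_one, ← ι_add, neg_add_cancel, ι_zero]



def bvec : Fin 6 → ℤ × ℤ := ![(1,0),(0,1),(1,1),(2,2),(0,0),(0,0)]

def vec (l : L) : ℤ × ℤ := if l.2 then bvec l.1 else -bvec l.1

def IsFlat (l : L) : Prop := l.1 = 0 ∨ l.1 = 1 ∨ l.1 = 2 ∨ l.1 = 3

instance isFlat_dec : DecidablePred IsFlat := fun l =>
  decidable_of_iff (l.1 = 0 ∨ l.1 = 1 ∨ l.1 = 2 ∨ l.1 = 3) Iff.rfl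

lemma d_eq : γ 3 = γ 0 ^ (2:ℤ) * γ 1 ^ (2:ℤ) := by
  have h1 : γ 3 = (γ 0 * γ 1) * (γ 0 * γ 1) := by rw [rel1, rel3]
  rw [h1, show γ 0 * γ 1 * (γ 0 * γ 1) = γ 0 * (γ 1 * γ 0) * γ 1 by group,
    comm_ab.symm.eq, zpow_two, zpow_two]
  group

lemma ev_flat {l : L} (h : IsFlat l) : ev l = ι (vec l) := by
  obtain ⟨i, b⟩ := l
  have hι : γ i = ι (bvec i) := by
    rcases h with h | h | h | h <;> subst h
    · simp [ι, bvec]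
    · simp [ι, bvec]
    · simp [ι, bvec, ← rel1]
    · simp [ι, bvec, d_eq]
  cases b with
  | true => simpa [ev, vec] using hι
  | false =>
      simp only [ev, vec, if_neg, Bool.false_eq_true, if_false, ι_neg]
      rw [hι]

def sumVec (w : List L) : ℤ × ℤ := (w.map vec).sum

lemma sumVec_nil : sumVec [] = 0 := rfl

lemma sumVec_cons (l : L) (w : List L) : sumVec (l :: w) = vec l + sumVec w := by
  simp [sumVec]

lemma sumVec_append (u v : List L) : sumVec (u ++ v) = sumVec u + sumVec v := by
  simp [sumVec]

lemma evW_flat {w : List L} (h : ∀ l ∈ w, IsFlat l) : evW w = ι (sumVec w) := by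
  induction w with
  | nil => simp [evW_nil, sumVec, ι_zero]
  | cons l w ih =>
      rw [evW_cons, sumVec_cons, ι_add, ih (fun x hx => h x (List.mem_cons_of_mem _ hx)),
        ev_flat (h l (List.mem_cons_self))]

/-- a canonical flat word with value `ι v` -/
def flatWord (v : ℤ × ℤ) : List L :=
  List.replicate v.1.natAbs ((0 : Fin 6), decide (0 ≤ v.1)) ++
    List.replicate v.2.natAbs ((1 : Fin 6), decide (0 ≤ v.2))

lemma evW_replicate (n : ℕ) (l : L) : evW (List.replicate n l) = ev l ^ n := by
  induction n with
  | zero => simp [evW]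
  | succ n ih => rw [List.replicate_succ, evW_cons, ih, pow_succ']

lemma gen_zpow_eval (i : Fin 6) (p : ℤ) :
    evW (List.replicate p.natAbs (i, decide (0 ≤ p))) = γ i ^ p := by
  rw [evW_replicate]
  rcases le_or_gt 0 p with h | h
  · simp [ev, h, ← zpow_natCast, Int.natAbs_of_nonneg h]
  · have hnp : ¬ (0 ≤ p) := not_le.2 h
    rw [decide_eq_false hnp]
    simp only [ev, Bool.false_eq_true, if_false]
    rw [inv_pow, ← zpow_natCast, ← zpow_neg]
    congr 1
    omega

lemma flatWord_eval (v : ℤ × ℤ) : evW (flatWord v) = ι v := by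
  rw [flatWord, evW_append, gen_zpow_eval, gen_zpow_eval, ι]

lemma flatWord_length (v : ℤ × ℤ) :
    (flatWord v).length = v.1.natAbs + v.2.natAbs := by
  simp [flatWord]

lemma flatWord_flat (v : ℤ × ℤ) : ∀ l ∈ flatWord v, IsFlat l := by
  intro l hl
  rcases List.mem_append.1 hl with h | h
  · rw [List.eq_of_mem_replicate h]; exact Or.inl rfl
  · rw [List.eq_of_mem_replicate h]; exact Or.inr (Or.inl rfl)

/-! ### tracking -/

def Tracks (k : ℕ) (w u : List L) : Prop :=
  ∀ t, ∃ c : List L, c.length ≤ k ∧ evW (w.take t) * evW c = evW (u.take t)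

lemma isWord_map_ev (w : List L) : IsWord XW (w.map ev) := by
  intro x hx
  rcases List.mem_map.1 hx with ⟨l, _, rfl⟩
  cases hb : l.2 with
  | true => exact Or.inl ⟨l.1, by simp [ev, hb, γ, XW]⟩
  | false => exact Or.inr ⟨l.1, by simp [ev, hb, γ, XW]⟩

lemma wdist_le {g h : GW} (c : List L) (hc : g * evW c = h) :
    wdist XW g h ≤ c.length :=
  Nat.sInf_le ⟨c.map ev, isWord_map_ev c, by simp, hc⟩

lemma syncFellow_of_tracks {k : ℕ} {w u : List L} (h : Tracks k w u) (g₀ : GW) :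
    SyncFellow XW k g₀ (w.map ev) g₀ (u.map ev) := by
  intro t
  obtain ⟨c, hc1, hc2⟩ := h t
  refine le_trans (wdist_le c ?_) hc1
  simp only [pathAt, ← List.map_take]
  rw [mul_assoc]
  exact congrArg (g₀ * ·) hc2



lemma tracks_core {k j : ℕ} {M M' : List L} (B : List L)
    (hval : evW M = evW M') (hlen : M'.length ≤ M.length)
    (hlen2 : M.length ≤ M'.length + j) (htr : Tracks k M M') :
    ∀ τ, ∃ c : List L, c.length ≤ k + j ∧
      evW ((M ++ B).take τ) * evW c = evW ((M' ++ B).take τ) := by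
  intro τ
  rw [List.take_append, List.take_append]
  by_cases hτ : τ ≤ M'.length
  · have h1 : τ - M.length = 0 := Nat.sub_eq_zero_of_le (le_trans hτ hlen)
    have h2 : τ - M'.length = 0 := Nat.sub_eq_zero_of_le hτ
    rw [h1, h2]
    simp only [List.take_zero, List.append_nil]
    obtain ⟨c, hc1, hc2⟩ := htr τ
    exact ⟨c, le_trans hc1 (Nat.le_add_right _ _), hc2⟩
  · push_neg at hτ
    obtain ⟨c₀, hc1, hc2⟩ := htr τ
    rw [List.take_of_length_le (le_of_lt hτ)] at hc2
    by_cases hM : τ ≤ M.length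
    · have h1 : τ - M.length = 0 := Nat.sub_eq_zero_of_le hM
      rw [h1]
      refine ⟨c₀ ++ B.take (τ - M'.length), ?_, ?_⟩
      · rw [List.length_append]
        have : (B.take (τ - M'.length)).length ≤ τ - M'.length := by
          simpa using List.length_take_le _ _
        omega
      · rw [List.take_of_length_le (le_of_lt hτ)]
        simp only [List.take_zero, List.append_nil, evW_append, ← mul_assoc, hc2]
    · push_neg at hM
      rw [List.take_of_length_le (le_of_lt hM), List.take_of_length_le (le_of_lt hτ)]
      refine ⟨(B.take (τ - M'.length)).drop (τ - M.length), ?_, ?_⟩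
      · have h1 : ((B.take (τ - M'.length)).drop (τ - M.length)).length
            = (B.take (τ - M'.length)).length - (τ - M.length) := List.length_drop
        have h2 : (B.take (τ - M'.length)).length ≤ τ - M'.length := by
          simpa using List.length_take_le _ _
        omega
      · have hBsplit : B.take (τ - M'.length)
            = B.take (τ - M.length) ++ (B.take (τ - M'.length)).drop (τ - M.length) := by
          conv_lhs => rw [← List.take_append_drop (τ - M.length) (B.take (τ - M'.length))]
          congr 1
          rw [List.take_take]
          congr 1
          omega
        rw [evW_append, evW_append, hval, mul_assoc]
        congr 1
        rw [← evW_append, ← hBsplit]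

lemma tracks_embed {k j : ℕ} {M M' : List L} (A B : List L)
    (hval : evW M = evW M') (hlen : M'.length ≤ M.length)
    (hlen2 : M.length ≤ M'.length + j) (htr : Tracks k M M') :
    Tracks (k + j) (A ++ M ++ B) (A ++ M' ++ B) := by
  intro t
  obtain ⟨c, hc1, hc2⟩ := tracks_core B hval hlen hlen2 htr (t - A.length)
  refine ⟨c, hc1, ?_⟩
  have e1 : (A ++ (M ++ B)).take t = A.take t ++ (M ++ B).take (t - A.length) :=
    List.take_append
  have e2 : (A ++ (M' ++ B)).take t = A.take t ++ (M' ++ B).take (t - A.length) :=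
    List.take_append
  rw [List.append_assoc A M B, List.append_assoc A M' B, e1, e2,
    evW_append, evW_append, mul_assoc, hc2]

/-- a word admitting a bounded-tracking shortening in place -/
def Shortenable (w : List L) : Prop :=
  ∃ u : List L, evW u = evW w ∧ u.length < w.length ∧ w.length ≤ u.length + 3 ∧
    Tracks 40 w u

lemma shortenable_embed {M : List L} (h : Shortenable M) (A B : List L) :
    ∃ u, evW u = evW (A ++ M ++ B) ∧ u.length < (A ++ M ++ B).length ∧
      Tracks 43 (A ++ M ++ B) u := by
  obtain ⟨M', hval, hlt, hle, htr⟩ := h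
  refine ⟨A ++ M' ++ B, by simp [evW_append, hval], by simp; omega, ?_⟩
  exact tracks_embed A B hval.symm (le_of_lt hlt) hle htr


/-! ### norms -/

def nrm (v : ℤ × ℤ) : ℕ := v.1.natAbs + v.2.natAbs

lemma nrm_add_le (a b : ℤ × ℤ) : nrm (a + b) ≤ nrm a + nrm b := by
  simp only [nrm, Prod.fst_add, Prod.snd_add]
  have h1 := Int.natAbs_add_le a.1 b.1
  have h2 := Int.natAbs_add_le a.2 b.2
  omega

lemma nrm_neg (a : ℤ × ℤ) : nrm (-a) = nrm a := by
  simp [nrm]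

lemma nrm_vec_le (l : L) : nrm (vec l) ≤ 4 := by
  obtain ⟨i, b⟩ := l
  revert b
  revert i
  decide

lemma nrm_sumVec_le (A : List L) : nrm (sumVec A) ≤ 4 * A.length := by
  induction A with
  | nil => simp [sumVec, nrm]
  | cons l A ih =>
      rw [sumVec_cons]
      calc nrm (vec l + sumVec A) ≤ nrm (vec l) + nrm (sumVec A) := nrm_add_le _ _
        _ ≤ 4 + 4 * A.length := by have := nrm_vec_le l; omega
        _ = 4 * (l :: A).length := by simp [List.length_cons]; ring

lemma sumVec_take_le (A : List L) (t : ℕ) : nrm (sumVec (A.take t)) ≤ 4 * t := by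
  calc nrm (sumVec (A.take t)) ≤ 4 * (A.take t).length := nrm_sumVec_le _
    _ ≤ 4 * t := by have : (A.take t).length ≤ t := by simpa using List.length_take_le t A
                    omega

lemma sumVec_slice {A : List L} {m n : ℕ} (h : n ≤ m) :
    nrm (sumVec (A.take m) - sumVec (A.take n)) ≤ 4 * (m - n) := by
  have hsplit : A.take m = A.take n ++ (A.take m).drop n := by
    conv_lhs => rw [← List.take_append_drop n (A.take m)]
    congr 1
    rw [List.take_take]
    congr 1
    omega
  rw [hsplit, sumVec_append]
  have h1 : sumVec (A.take n) + sumVec ((A.take m).drop n) - sumVec (A.take n)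
      = sumVec ((A.take m).drop n) := by abel
  rw [h1]
  calc nrm (sumVec ((A.take m).drop n)) ≤ 4 * ((A.take m).drop n).length :=
        nrm_sumVec_le _
    _ ≤ 4 * (m - n) := by
        have h2 : ((A.take m).drop n).length = (A.take m).length - n := List.length_drop
        have h3 : (A.take m).length ≤ m := by simpa using List.length_take_le m A
        omega

lemma sumVec_take_append (A B : List L) (t : ℕ) :
    sumVec ((A ++ B).take t) = sumVec (A.take t) + sumVec (B.take (t - A.length)) := by
  rw [List.take_append, sumVec_append]

lemma sumVec_take_cons (u : L) (B : List L) (t : ℕ) :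
    sumVec ((u :: B).take t) = sumVec ([u].take t) + sumVec (B.take (t - 1)) := by
  have : u :: B = [u] ++ B := rfl
  rw [this, sumVec_take_append]
  rfl

lemma sumVec_flatWord (v : ℤ × ℤ) : sumVec (flatWord v) = v := by
  have hrep : ∀ (i : Fin 6) (p : ℤ),
      sumVec (List.replicate p.natAbs (i, decide (0 ≤ p))) = p • bvec i := by
    intro i p
    have : ∀ (n : ℕ) (l : L), sumVec (List.replicate n l) = (n : ℤ) • vec l := by
      intro n l
      induction n with
      | zero => simp [sumVec]
      | succ n ih => rw [List.replicate_succ, sumVec_cons, ih]; push_cast; rw [add_smul]; abel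
    rcases le_or_gt 0 p with h | h
    · rw [this]
      have hb : decide (0 ≤ p) = true := decide_eq_true h
      simp only [vec, hb, if_true]
      rw [Int.natAbs_of_nonneg h]
    · rw [this]
      have hnp : ¬ (0 ≤ p) := not_le.2 h
      have hb : decide (0 ≤ p) = false := decide_eq_false hnp
      simp only [vec, hb, Bool.false_eq_true, if_false]
      rw [smul_neg, ← neg_smul]
      congr 1
      omega
  rw [flatWord, sumVec_append, hrep, hrep]
  simp [bvec, Prod.ext_iff]

lemma flatWord_length_eq (v : ℤ × ℤ) : (flatWord v).length = nrm v := flatWord_length v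

/-- generic flat-window shortening -/
lemma sh_flat {M M' : List L} (hf : ∀ l ∈ M, IsFlat l) (hf' : ∀ l ∈ M', IsFlat l)
    (hsum : sumVec M' = sumVec M) (hlt : M'.length < M.length)
    (hle : M.length ≤ M'.length + 3)
    (hdev : ∀ t, nrm (sumVec (M'.take t) - sumVec (M.take t)) ≤ 40) :
    Shortenable M := by
  refine ⟨M', ?_, hlt, hle, ?_⟩
  · rw [evW_flat hf, evW_flat hf', hsum]
  · intro t
    refine ⟨flatWord (sumVec (M'.take t) - sumVec (M.take t)), ?_, ?_⟩
    · rw [flatWord_length_eq]; exact hdev t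
    · rw [evW_flat (fun l hl => hf l (List.mem_of_mem_take hl)),
        evW_flat (fun l hl => hf' l (List.mem_of_mem_take hl)), flatWord_eval, ← ι_add]
      congr 1
      abel

/-- flat pair move -/
lemma sh_pair {u₁ u₂ : L} {A₂ z : List L} (h1 : IsFlat u₁) (h2 : IsFlat u₂)
    (hA : ∀ l ∈ A₂, IsFlat l) (hzf : ∀ l ∈ z, IsFlat l)
    (hzs : sumVec z = vec u₁ + vec u₂) (hzlen : z.length ≤ 1) :
    Shortenable (u₁ :: (A₂ ++ [u₂])) := by
  refine sh_flat (M' := A₂ ++ z) ?_ ?_ ?_ ?_ ?_ ?_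
  · intro l hl
    rcases List.mem_cons.1 hl with h | h
    · exact h ▸ h1
    rcases List.mem_append.1 h with h | h
    · exact hA l h
    · rw [List.mem_singleton.1 h]; exact h2
  · intro l hl
    rcases List.mem_append.1 hl with h | h
    · exact hA l h
    · exact hzf l h
  · rw [sumVec_append, sumVec_cons, sumVec_append, hzs]
    simp [sumVec]
    abel
  · simp only [List.length_append, List.length_cons, List.length_nil]
    omega
  · simp only [List.length_append, List.length_cons, List.length_nil]
    omega
  · intro t
    rw [sumVec_take_cons, sumVec_take_append, sumVec_take_append]
    have e1 : nrm (sumVec (A₂.take t) - sumVec (A₂.take (t - 1))) ≤ 4 :=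
      le_trans (sumVec_slice (Nat.sub_le _ _)) (by omega)
    have e2 : nrm (sumVec (z.take (t - A₂.length))) ≤ 4 := by
      refine le_trans (nrm_sumVec_le _) ?_
      have h5 : (z.take (t - A₂.length)).length = min (t - A₂.length) z.length :=
        List.length_take
      omega
    have e3 : nrm (sumVec (([u₁].take t))) ≤ 4 := by
      refine le_trans (nrm_sumVec_le _) ?_
      have h5 : (([u₁] : List L).take t).length = min t 1 := by
        rw [List.length_take, List.length_cons, List.length_nil]
      omega
    have e4 : nrm (sumVec (([u₂].take (t - 1 - A₂.length)))) ≤ 4 := by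
      refine le_trans (nrm_sumVec_le _) ?_
      have h5 : (([u₂] : List L).take (t - 1 - A₂.length)).length = min (t - 1 - A₂.length) 1 := by
        rw [List.length_take, List.length_cons, List.length_nil]
      omega
    have key : sumVec (A₂.take t) + sumVec (z.take (t - A₂.length)) -
        (sumVec ([u₁].take t) + (sumVec (A₂.take (t - 1)) +
          sumVec ([u₂].take (t - 1 - A₂.length))))
        = (sumVec (A₂.take t) - sumVec (A₂.take (t - 1)))
          + sumVec (z.take (t - A₂.length))
          + (-(sumVec ([u₁].take t)) + -(sumVec ([u₂].take (t - 1 - A₂.length)))) := by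
      abel
    rw [key]
    calc nrm _ ≤ nrm ((sumVec (A₂.take t) - sumVec (A₂.take (t - 1)))
          + sumVec (z.take (t - A₂.length)))
          + nrm (-(sumVec ([u₁].take t)) + -(sumVec ([u₂].take (t - 1 - A₂.length)))) :=
            nrm_add_le _ _
      _ ≤ _ := by
          have i1 := nrm_add_le (sumVec (A₂.take t) - sumVec (A₂.take (t - 1)))
            (sumVec (z.take (t - A₂.length)))
          have i2 := nrm_add_le (-(sumVec ([u₁].take t)))
            (-(sumVec ([u₂].take (t - 1 - A₂.length))))
          rw [nrm_neg, nrm_neg] at i2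
          omega


/-- flat triple move -/
lemma sh_triple {u₁ u₂ u₃ : L} {A₂ A₃ z : List L}
    (h1 : IsFlat u₁) (h2 : IsFlat u₂) (h3 : IsFlat u₃)
    (hA₂ : ∀ l ∈ A₂, IsFlat l) (hA₃ : ∀ l ∈ A₃, IsFlat l)
    (hzf : ∀ l ∈ z, IsFlat l)
    (hzs : sumVec z = vec u₁ + vec u₂ + vec u₃) (hzlen : z.length ≤ 2) :
    Shortenable (u₁ :: (A₂ ++ u₂ :: (A₃ ++ [u₃]))) := by
  refine sh_flat (M' := A₂ ++ (A₃ ++ z)) ?_ ?_ ?_ ?_ ?_ ?_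
  · intro l hl
    rcases List.mem_cons.1 hl with h | h
    · exact h ▸ h1
    rcases List.mem_append.1 h with h | h
    · exact hA₂ l h
    rcases List.mem_cons.1 h with h | h
    · exact h ▸ h2
    rcases List.mem_append.1 h with h | h
    · exact hA₃ l h
    · rw [List.mem_singleton.1 h]; exact h3
  · intro l hl
    rcases List.mem_append.1 hl with h | h
    · exact hA₂ l h
    rcases List.mem_append.1 h with h | h
    · exact hA₃ l h
    · exact hzf l h
  · rw [sumVec_append, sumVec_append, hzs, sumVec_cons, sumVec_append,
      sumVec_cons, sumVec_append]
    simp only [sumVec_cons, sumVec_nil]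
    abel
  · simp only [List.length_append, List.length_cons, List.length_nil]
    omega
  · simp only [List.length_append, List.length_cons, List.length_nil]
    omega
  · intro t
    have expM : sumVec ((u₁ :: (A₂ ++ u₂ :: (A₃ ++ [u₃]))).take t)
        = sumVec ([u₁].take t) + (sumVec (A₂.take (t-1)) +
          (sumVec ([u₂].take (t-1-A₂.length)) + (sumVec (A₃.take (t-1-A₂.length-1)) +
            sumVec ([u₃].take (t-1-A₂.length-1-A₃.length))))) := by
      rw [sumVec_take_cons u₁, sumVec_take_append A₂, sumVec_take_cons u₂,
        sumVec_take_append A₃]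
    have expM' : sumVec ((A₂ ++ (A₃ ++ z)).take t)
        = sumVec (A₂.take t) + (sumVec (A₃.take (t-A₂.length)) +
          sumVec (z.take (t-A₂.length-A₃.length))) := by
      rw [sumVec_take_append A₂, sumVec_take_append A₃]
    rw [expM, expM']
    set a₂ := A₂.length
    set a₃ := A₃.length
    have e1 : nrm (sumVec (A₂.take t) - sumVec (A₂.take (t - 1))) ≤ 4 :=
      le_trans (sumVec_slice (Nat.sub_le _ _)) (by omega)
    have e2 : nrm (sumVec (A₃.take (t - a₂)) - sumVec (A₃.take (t - 1 - a₂ - 1))) ≤ 8 := by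
      refine le_trans (sumVec_slice (by omega)) (by omega)
    have e3 : nrm (sumVec (z.take (t - a₂ - a₃))) ≤ 8 := by
      refine le_trans (nrm_sumVec_le _) ?_
      have h5 : (z.take (t - a₂ - a₃)).length = min (t - a₂ - a₃) z.length :=
        List.length_take
      omega
    have e4 : nrm (sumVec (([u₁].take t))) ≤ 4 := by
      refine le_trans (nrm_sumVec_le _) ?_
      have h5 : (([u₁] : List L).take t).length = min t 1 := by
        rw [List.length_take, List.length_cons, List.length_nil]
      omega
    have e5 : nrm (sumVec (([u₂].take (t - 1 - a₂)))) ≤ 4 := by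
      refine le_trans (nrm_sumVec_le _) ?_
      have h5 : (([u₂] : List L).take (t - 1 - a₂)).length = min (t - 1 - a₂) 1 := by
        rw [List.length_take, List.length_cons, List.length_nil]
      omega
    have e6 : nrm (sumVec (([u₃].take (t - 1 - a₂ - 1 - a₃)))) ≤ 4 := by
      refine le_trans (nrm_sumVec_le _) ?_
      have h5 : (([u₃] : List L).take (t - 1 - a₂ - 1 - a₃)).length
          = min (t - 1 - a₂ - 1 - a₃) 1 := by
        rw [List.length_take, List.length_cons, List.length_nil]
      omega
    have key : sumVec (A₂.take t) + (sumVec (A₃.take (t - a₂))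
          + sumVec (z.take (t - a₂ - a₃)))
        - (sumVec ([u₁].take t) + (sumVec (A₂.take (t - 1))
          + (sumVec ([u₂].take (t - 1 - a₂)) + (sumVec (A₃.take (t - 1 - a₂ - 1))
          + sumVec ([u₃].take (t - 1 - a₂ - 1 - a₃))))))
        = (sumVec (A₂.take t) - sumVec (A₂.take (t - 1)))
          + (sumVec (A₃.take (t - a₂)) - sumVec (A₃.take (t - 1 - a₂ - 1)))
          + sumVec (z.take (t - a₂ - a₃))
          + (-(sumVec ([u₁].take t)) + (-(sumVec ([u₂].take (t - 1 - a₂)))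
            + -(sumVec ([u₃].take (t - 1 - a₂ - 1 - a₃))))) := by
      abel
    rw [key]
    have i1 := nrm_add_le ((sumVec (A₂.take t) - sumVec (A₂.take (t - 1)))
        + (sumVec (A₃.take (t - a₂)) - sumVec (A₃.take (t - 1 - a₂ - 1)))
        + sumVec (z.take (t - a₂ - a₃)))
      ((-(sumVec ([u₁].take t)) + (-(sumVec ([u₂].take (t - 1 - a₂)))
        + -(sumVec ([u₃].take (t - 1 - a₂ - 1 - a₃))))))
    have i2 := nrm_add_le ((sumVec (A₂.take t) - sumVec (A₂.take (t - 1)))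
        + (sumVec (A₃.take (t - a₂)) - sumVec (A₃.take (t - 1 - a₂ - 1))))
      (sumVec (z.take (t - a₂ - a₃)))
    have i3 := nrm_add_le (sumVec (A₂.take t) - sumVec (A₂.take (t - 1)))
      (sumVec (A₃.take (t - a₂)) - sumVec (A₃.take (t - 1 - a₂ - 1)))
    have i4 := nrm_add_le (-(sumVec ([u₁].take t)))
      ((-(sumVec ([u₂].take (t - 1 - a₂)))
        + -(sumVec ([u₃].take (t - 1 - a₂ - 1 - a₃)))))
    have i5 := nrm_add_le (-(sumVec ([u₂].take (t - 1 - a₂))))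
      (-(sumVec ([u₃].take (t - 1 - a₂ - 1 - a₃))))
    simp only [nrm_neg] at i4 i5
    omega

lemma evW_singleton (l : L) : evW [l] = ev l := by simp [evW]

/-- corridor pinch move: `ē xᵖ e → x'ᵖ` where `x e = e x'` in the group. -/
lemma sh_pinch {e' e x x' : L} (p : ℕ)
    (hinv : ev e' = (ev e)⁻¹) (hpush : ev x * ev e = ev e * ev x') :
    Shortenable (e' :: (List.replicate p x ++ [e])) := by
  have hpow : ∀ n : ℕ, (ev x)^n * ev e = ev e * (ev x')^n := by
    intro n
    induction n with
    | zero => simp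
    | succ n ih =>
        rw [pow_succ, pow_succ, mul_assoc, hpush, ← mul_assoc, ih, mul_assoc]
  have hval : evW (e' :: (List.replicate p x ++ [e])) = evW (List.replicate p x') := by
    rw [evW_cons, evW_append, evW_replicate, evW_replicate, evW_singleton, hinv,
      hpow p, ← mul_assoc, inv_mul_cancel, one_mul]
  refine ⟨List.replicate p x', hval.symm, ?_, ?_, ?_⟩
  · simp only [List.length_cons, List.length_append, List.length_replicate,
      List.length_nil]
    omega
  · simp only [List.length_cons, List.length_append, List.length_replicate,
      List.length_nil]
    omega
  · intro t
    cases t with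
    | zero => exact ⟨[], by simp, by simp [evW]⟩
    | succ n =>
        rw [List.take_succ_cons, evW_cons, List.take_replicate]
        rcases lt_or_ge n p with hn | hn
        · have h1 : (List.replicate p x ++ [e]).take n = List.replicate n x := by
            rw [List.take_append, List.take_replicate,
              min_eq_left (le_of_lt hn), List.length_replicate,
              Nat.sub_eq_zero_of_le (le_of_lt hn), List.take_zero, List.append_nil]
          have h2 : min (n+1) p = n + 1 := by omega
          refine ⟨[e, x'], by norm_num, ?_⟩
          rw [h1, h2, evW_replicate, evW_replicate, hinv,
            show evW [e, x'] = ev e * ev x' from by simp [evW]]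
          calc (ev e)⁻¹ * (ev x)^n * (ev e * ev x')
              = (ev e)⁻¹ * ((ev x)^n * ev e) * ev x' := by group
            _ = (ev e)⁻¹ * (ev e * (ev x')^n) * ev x' := by rw [hpow n]
            _ = (ev x')^(n+1) := by rw [pow_succ]; group
        · have h2 : min (n+1) p = p := by omega
          rcases eq_or_lt_of_le hn with he | hlt
          · have h1 : (List.replicate p x ++ [e]).take n = List.replicate p x := by
              rw [List.take_append, List.take_replicate,
                min_eq_right (le_of_eq he), List.length_replicate, ← he,
                Nat.sub_self, List.take_zero, List.append_nil]
            refine ⟨[e], by norm_num, ?_⟩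
            rw [h1, h2, evW_replicate, evW_replicate, hinv, evW_singleton]
            calc (ev e)⁻¹ * (ev x)^p * ev e
                = (ev e)⁻¹ * ((ev x)^p * ev e) := by group
              _ = (ev e)⁻¹ * (ev e * (ev x')^p) := by rw [hpow p]
              _ = (ev x')^p := by group
          · have h1 : (List.replicate p x ++ [e]).take n = List.replicate p x ++ [e] := by
              apply List.take_of_length_le
              simp only [List.length_append, List.length_replicate, List.length_nil,
                List.length_cons]
              omega
            refine ⟨[], by norm_num, ?_⟩
            rw [h1, h2, evW_append, evW_replicate, evW_replicate, evW_singleton, hinv]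
            rw [show evW [] = 1 from rfl, mul_one, hpow p, ← mul_assoc,
              inv_mul_cancel, one_mul]


/-! ### The iterated HNN extension model -/

abbrev Z2 := Multiplicative (ℤ × ℤ)

def ofZ (v : ℤ × ℤ) : Z2 := Multiplicative.ofAdd v

def addA : ℤ →+ ℤ × ℤ := AddMonoidHom.inl ℤ ℤ
def addB : ℤ →+ ℤ × ℤ := AddMonoidHom.inr ℤ ℤ
def addD : ℤ →+ ℤ × ℤ :=
  { toFun := fun n => (2*n, 2*n)
    map_zero' := by simp
    map_add' := by intro a b; apply Prod.ext <;> simp <;> ring }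

def mA : Multiplicative ℤ →* Z2 := AddMonoidHom.toMultiplicative addA
def mB : Multiplicative ℤ →* Z2 := AddMonoidHom.toMultiplicative addB
def mD : Multiplicative ℤ →* Z2 := AddMonoidHom.toMultiplicative addD

lemma mA_inj : Function.Injective mA := by
  intro x y h
  have : addA x.toAdd = addA y.toAdd := h
  simpa [addA, Prod.ext_iff] using this

lemma mB_inj : Function.Injective mB := by
  intro x y h
  have : addB x.toAdd = addB y.toAdd := h
  simpa [addB, Prod.ext_iff] using this

lemma mD_inj : Function.Injective mD := by
  intro x y h
  have : addD x.toAdd = addD y.toAdd := h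
  simp only [addD, AddMonoidHom.coe_mk, ZeroHom.coe_mk, Prod.ext_iff] at this
  have : x.toAdd = y.toAdd := by omega
  exact this

def A1 : Subgroup Z2 := mA.range
def B1 : Subgroup Z2 := mD.range

noncomputable def eqA1 : Multiplicative ℤ ≃* A1 :=
  MulEquiv.ofBijective mA.rangeRestrict
    ⟨fun x y h => mA_inj (congrArg Subtype.val h), mA.rangeRestrict_surjective⟩

noncomputable def eqB1 : Multiplicative ℤ ≃* B1 :=
  MulEquiv.ofBijective mD.rangeRestrict
    ⟨fun x y h => mD_inj (congrArg Subtype.val h), mD.rangeRestrict_surjective⟩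

noncomputable def φ1 : A1 ≃* B1 := eqA1.symm.trans eqB1

abbrev G1 := HNNExtension Z2 A1 B1 φ1

noncomputable def of1 : Z2 →* G1 := HNNExtension.of
noncomputable def t1 : G1 := HNNExtension.t

lemma φ1_apply (n : Multiplicative ℤ) : (φ1 (eqA1 n) : Z2) = mD n := by
  show (eqB1 (eqA1.symm (eqA1 n)) : Z2) = mD n
  rw [MulEquiv.symm_apply_apply]
  rfl

lemma eqA1_val (n : Multiplicative ℤ) : (eqA1 n : Z2) = mA n := rfl

lemma t1_conj (n : Multiplicative ℤ) :
    t1 * of1 (mA n) * t1⁻¹ = of1 (mD n) := by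
  have h := HNNExtension.t_mul_of (G := Z2) (A := A1) (B := B1) (φ := φ1) (eqA1 n)
  rw [eqA1_val, φ1_apply] at h
  rw [mul_inv_eq_iff_eq_mul]
  exact h

def gb : Z2 := ofZ (0,1)
def gd : Z2 := ofZ (2,2)

noncomputable def mB2 : Multiplicative ℤ →* G1 := of1.comp mB
noncomputable def mD2 : Multiplicative ℤ →* G1 := of1.comp mD

lemma of1_inj : Function.Injective of1 := HNNExtension.of_injective φ1

lemma mB2_inj : Function.Injective mB2 := fun x y h => mB_inj (of1_inj h)
lemma mD2_inj : Function.Injective mD2 := fun x y h => mD_inj (of1_inj h)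

noncomputable def A2 : Subgroup G1 := mB2.range
noncomputable def B2 : Subgroup G1 := mD2.range

noncomputable def eqA2 : Multiplicative ℤ ≃* A2 :=
  MulEquiv.ofBijective mB2.rangeRestrict
    ⟨fun x y h => mB2_inj (congrArg Subtype.val h), mB2.rangeRestrict_surjective⟩

noncomputable def eqB2 : Multiplicative ℤ ≃* B2 :=
  MulEquiv.ofBijective mD2.rangeRestrict
    ⟨fun x y h => mD2_inj (congrArg Subtype.val h), mD2.rangeRestrict_surjective⟩

noncomputable def ψ2 : A2 ≃* B2 := eqA2.symm.trans eqB2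

abbrev G2 := HNNExtension G1 A2 B2 ψ2

noncomputable def of2 : G1 →* G2 := HNNExtension.of
noncomputable def t2 : G2 := HNNExtension.t

lemma ψ2_apply (n : Multiplicative ℤ) : (ψ2 (eqA2 n) : G1) = mD2 n := by
  show (eqB2 (eqA2.symm (eqA2 n)) : G1) = mD2 n
  rw [MulEquiv.symm_apply_apply]
  rfl

lemma eqA2_val (n : Multiplicative ℤ) : (eqA2 n : G1) = mB2 n := rfl

lemma t2_conj (n : Multiplicative ℤ) :
    t2 * of2 (mB2 n) * t2⁻¹ = of2 (mD2 n) := by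
  have h := HNNExtension.t_mul_of (G := G1) (A := A2) (B := B2) (φ := ψ2) (eqA2 n)
  rw [eqA2_val, ψ2_apply] at h
  rw [mul_inv_eq_iff_eq_mul]
  exact h

lemma of2_inj : Function.Injective of2 := HNNExtension.of_injective ψ2

/-- The target images of the six generators. -/
noncomputable def fgen : Fin 6 → G2 :=
  ![of2 (of1 (ofZ (1,0))), of2 (of1 (ofZ (0,1))), of2 (of1 (ofZ (1,1))),
    of2 (of1 (ofZ (2,2))), of2 t1⁻¹, t2⁻¹]

lemma ofZ_mul (v w : ℤ × ℤ) : ofZ v * ofZ w = ofZ (v + w) := rfl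

lemma mA_eq (n : ℤ) : mA (Multiplicative.ofAdd n) = ofZ (n, 0) := rfl
lemma mB_eq (n : ℤ) : mB (Multiplicative.ofAdd n) = ofZ (0, n) := rfl
lemma mD_eq (n : ℤ) : mD (Multiplicative.ofAdd n) = ofZ (2*n, 2*n) := rfl

lemma fgen_rels : ∀ r ∈ wiseRels, FreeGroup.lift fgen r = 1 := by
  intro r hr
  have conj1 : (of2 t1⁻¹)⁻¹ * of2 (of1 (ofZ (1,0))) * of2 t1⁻¹
      = of2 (of1 (ofZ (2,2))) := by
    have h := t1_conj (Multiplicative.ofAdd 1)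
    rw [mA_eq, mD_eq] at h
    norm_num at h
    rw [← map_inv, ← map_mul, ← map_mul]
    exact congrArg of2 (by
      rw [show t1⁻¹⁻¹ * of1 (ofZ (1, 0)) * t1⁻¹ = t1 * of1 (ofZ (1,0)) * t1⁻¹ by group, h])
  have conj2 : (t2⁻¹)⁻¹ * of2 (of1 (ofZ (0,1))) * t2⁻¹
      = of2 (of1 (ofZ (2,2))) := by
    have h := t2_conj (Multiplicative.ofAdd 1)
    have hB : mB2 (Multiplicative.ofAdd 1) = of1 (ofZ (0,1)) := by
      simp [mB2, mB_eq]
    have hD : mD2 (Multiplicative.ofAdd 1) = of1 (ofZ (2,2)) := by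
      simp only [mD2, MonoidHom.comp_apply, mD_eq]
      norm_num
    rw [hB, hD] at h
    rw [show (t2⁻¹)⁻¹ * of2 (of1 (ofZ (0, 1))) * t2⁻¹ = t2 * of2 (of1 (ofZ (0,1))) * t2⁻¹
      by group]
    exact h
  simp only [wiseRels, Set.mem_insert_iff, Set.mem_singleton_iff] at hr
  rcases hr with rfl | rfl | rfl | rfl | rfl <;>
    simp only [map_mul, map_inv, FreeGroup.lift_apply_of]
  · show fgen 0 * fgen 1 * (fgen 2)⁻¹ = 1
    simp only [fgen]
    rw [mul_inv_eq_one]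
    show of2 (of1 (ofZ (1,0))) * of2 (of1 (ofZ (0,1))) = of2 (of1 (ofZ (1,1)))
    rw [← map_mul, ← map_mul, ofZ_mul]
    have : ((1:ℤ),(0:ℤ)) + ((0:ℤ),(1:ℤ)) = ((1:ℤ),(1:ℤ)) := by simp
    rw [this]
  · show fgen 1 * fgen 0 * (fgen 2)⁻¹ = 1
    simp only [fgen]
    rw [mul_inv_eq_one]
    show of2 (of1 (ofZ (0,1))) * of2 (of1 (ofZ (1,0))) = of2 (of1 (ofZ (1,1)))
    rw [← map_mul, ← map_mul, ofZ_mul]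
    have : ((0:ℤ),(1:ℤ)) + ((1:ℤ),(0:ℤ)) = ((1:ℤ),(1:ℤ)) := by simp
    rw [this]
  · show fgen 2 * fgen 2 * (fgen 3)⁻¹ = 1
    simp only [fgen]
    rw [mul_inv_eq_one]
    show of2 (of1 (ofZ (1,1))) * of2 (of1 (ofZ (1,1))) = of2 (of1 (ofZ (2,2)))
    rw [← map_mul, ← map_mul, ofZ_mul]
    have : ((1:ℤ),(1:ℤ)) + ((1:ℤ),(1:ℤ)) = ((2:ℤ),(2:ℤ)) := by
      apply Prod.ext <;> norm_num
    rw [this]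
  · show (fgen 4)⁻¹ * fgen 0 * fgen 4 * (fgen 3)⁻¹ = 1
    simp only [fgen]
    rw [mul_inv_eq_one]
    exact conj1
  · show (fgen 5)⁻¹ * fgen 1 * fgen 5 * (fgen 3)⁻¹ = 1
    simp only [fgen]
    rw [mul_inv_eq_one]
    exact conj2

noncomputable def Θ : GW →* G2 := PresentedGroup.toGroup fgen_rels

lemma Θ_γ (i : Fin 6) : Θ (γ i) = fgen i := PresentedGroup.toGroup.of fgen_rels

lemma Θι (v : ℤ × ℤ) : Θ (ι v) = of2 (of1 (ofZ v)) := by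
  have h1 : ofZ (1,0) ^ v.1 = ofZ (v.1, 0) := by
    show Multiplicative.ofAdd _ ^ _ = _
    rw [← ofAdd_zsmul]
    congr 1
    simp [Prod.ext_iff]
  have h2 : ofZ (0,1) ^ v.2 = ofZ (0, v.2) := by
    show Multiplicative.ofAdd _ ^ _ = _
    rw [← ofAdd_zsmul]
    congr 1
    simp [Prod.ext_iff]
  have hz : ofZ (1,0) ^ v.1 * ofZ (0,1) ^ v.2 = ofZ v := by
    rw [h1, h2, ofZ_mul]
    congr 1
    simp
  rw [ι, map_mul, map_zpow, map_zpow, Θ_γ, Θ_γ]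
  have e0 : fgen 0 = of2 (of1 (ofZ (1,0))) := rfl
  have e1 : fgen 1 = of2 (of1 (ofZ (0,1))) := rfl
  rw [e0, e1, ← map_zpow of2, ← map_zpow of2, ← map_zpow of1, ← map_zpow of1,
    ← map_mul of2, ← map_mul of1]
  exact congrArg of2 (congrArg of1 hz)

lemma ι_inj : Function.Injective ι := by
  intro v w h
  have h2 : of2 (of1 (ofZ v)) = of2 (of1 (ofZ w)) := by rw [← Θι, ← Θι, h]
  have h3 : ofZ v = ofZ w := of1_inj (of2_inj h2)
  exact Multiplicative.ofAdd.injective h3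


/-! ### Britton's lemma wrapper -/

lemma britton_aux {G : Type*} [Group G] {A B : Subgroup G} {φ : A ≃* B}
    (head : G) (list : List (ℤˣ × G))
    (hchain : list.Chain' (fun a b => a.2 ∈ HNNExtension.toSubgroup A B a.1 → a.1 = b.1))
    (hne : list ≠ [])
    (hmem : (HNNExtension.of head *
        (list.map fun x => (HNNExtension.t : HNNExtension G A B φ) ^ (x.1 : ℤ)
          * HNNExtension.of x.2).prod) ∈
      (HNNExtension.of (G := G) (A := A) (B := B) (φ := φ)).range) : False := by
  let w : HNNExtension.NormalWord.ReducedWord G A B := ⟨head, list, hchain⟩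
  have hprod : w.prod φ = HNNExtension.of head *
      (list.map fun x => (HNNExtension.t : HNNExtension G A B φ) ^ (x.1 : ℤ)
        * HNNExtension.of x.2).prod := rfl
  have := HNNExtension.ReducedWord.toList_eq_nil_of_mem_of_range φ w (by rw [hprod]; exact hmem)
  exact hne this

/-! ### parsing words into blocks -/

def cat : List (L × List L) → List L
  | [] => []
  | (l, f) :: r => l :: (f ++ cat r)

lemma cat_nil : cat [] = [] := rfl

lemma cat_cons (l : L) (f : List L) (r : List (L × List L)) :
    cat ((l, f) :: r) = l :: (f ++ cat r) := rfl

lemma cat_append (E₁ E₂ : List (L × List L)) : cat (E₁ ++ E₂) = cat E₁ ++ cat E₂ := by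
  induction E₁ with
  | nil => rfl
  | cons pr r ih =>
      obtain ⟨l, f⟩ := pr
      simp [cat_cons, ih]

def grp (p : L → Bool) : List L → List L × List (L × List L)
  | [] => ([], [])
  | l :: w =>
      if p l then ([], (l, (grp p w).1) :: (grp p w).2)
      else (l :: (grp p w).1, (grp p w).2)

lemma grp_recon (p : L → Bool) (w : List L) : (grp p w).1 ++ cat (grp p w).2 = w := by
  induction w with
  | nil => rfl
  | cons l w ih =>
      by_cases h : p l
      · simp only [grp, if_pos h, cat_cons, List.nil_append]
        rw [ih]
      · simp only [grp, if_neg h, List.cons_append, ih]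

lemma grp_head (p : L → Bool) (w : List L) : ∀ l ∈ (grp p w).1, p l = false := by
  induction w with
  | nil => intro l h; simp [grp] at h
  | cons x w ih =>
      intro l hl
      by_cases h : p x
      · simp only [grp, if_pos h] at hl
        simp at hl
      · simp only [grp, if_neg h] at hl
        rcases List.mem_cons.1 hl with rfl | hl
        · simpa using h
        · exact ih l hl

lemma grp_seg (p : L → Bool) (w : List L) :
    ∀ pr ∈ (grp p w).2, p pr.1 = true ∧ ∀ l ∈ pr.2, p l = false := by
  induction w with
  | nil => intro pr h; simp [grp] at h
  | cons x w ih =>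
      intro pr hpr
      by_cases h : p x
      · simp only [grp, if_pos h] at hpr
        rcases List.mem_cons.1 hpr with rfl | hpr
        · exact ⟨by simpa using h, grp_head p w⟩
        · exact ih pr hpr
      · simp only [grp, if_neg h] at hpr
        exact ih pr hpr

lemma grp_entries_ne (p : L → Bool) {w : List L} {l : L} (hl : l ∈ w) (hp : p l = true) :
    (grp p w).2 ≠ [] := by
  induction w with
  | nil => simp at hl
  | cons x w ih =>
      by_cases h : p x
      · simp [grp, if_pos h]
      · simp only [grp, if_neg h]
        rcases List.mem_cons.1 hl with rfl | hl
        · rw [hp] at h; simp at h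
        · exact ih hl

lemma grp_mem (p : L → Bool) (w : List L) :
    (∀ l ∈ (grp p w).1, l ∈ w) ∧ (∀ pr ∈ (grp p w).2, pr.1 ∈ w ∧ ∀ l ∈ pr.2, l ∈ w) := by
  induction w with
  | nil => constructor <;> intro x h <;> simp [grp] at h
  | cons x w ih =>
      by_cases h : p x
      · simp only [grp, if_pos h]
        constructor
        · intro l hl; simp at hl
        · intro pr hpr
          rcases List.mem_cons.1 hpr with rfl | hpr
          · exact ⟨List.mem_cons_self,
              fun l hl => List.mem_cons_of_mem _ (ih.1 l hl)⟩
          · exact ⟨List.mem_cons_of_mem _ (ih.2 pr hpr).1,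
              fun l hl => List.mem_cons_of_mem _ ((ih.2 pr hpr).2 l hl)⟩
      · simp only [grp, if_neg h]
        constructor
        · intro l hl
          rcases List.mem_cons.1 hl with rfl | hl
          · exact List.mem_cons_self
          · exact List.mem_cons_of_mem _ (ih.1 l hl)
        · intro pr hpr
          exact ⟨List.mem_cons_of_mem _ (ih.2 pr hpr).1,
            fun l hl => List.mem_cons_of_mem _ ((ih.2 pr hpr).2 l hl)⟩


/-! ### evaluations at each HNN level -/

def η (l : L) : ℤˣ := if l.2 then -1 else 1

noncomputable def ev1 (l : L) : G1 :=
  if l.1 = 4 then (if l.2 then t1⁻¹ else t1) else of1 (ofZ (vec l))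

noncomputable def evW1 (f : List L) : G1 := (f.map ev1).prod

lemma evW1_append (u v : List L) : evW1 (u ++ v) = evW1 u * evW1 v := by simp [evW1]

lemma evW1_cons (l : L) (v : List L) : evW1 (l :: v) = ev1 l * evW1 v := by simp [evW1]

lemma fin6_cases (i : Fin 6) : i = 0 ∨ i = 1 ∨ i = 2 ∨ i = 3 ∨ i = 4 ∨ i = 5 := by
  fin_cases i <;> simp

lemma isFlat_of_ne {l : L} (h4 : l.1 ≠ 4) (h5 : l.1 ≠ 5) : IsFlat l := by
  rcases fin6_cases l.1 with h|h|h|h|h|h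
  · exact Or.inl h
  · exact Or.inr (Or.inl h)
  · exact Or.inr (Or.inr (Or.inl h))
  · exact Or.inr (Or.inr (Or.inr h))
  · exact absurd h h4
  · exact absurd h h5

lemma isFlat_ne4 {l : L} (h : IsFlat l) : l.1 ≠ 4 := by
  rcases h with h|h|h|h <;> rw [h] <;> decide

lemma isFlat_ne5 {l : L} (h : IsFlat l) : l.1 ≠ 5 := by
  rcases h with h|h|h|h <;> rw [h] <;> decide

lemma ev1_flat {l : L} (h : IsFlat l) : ev1 l = of1 (ofZ (vec l)) := by
  rw [ev1, if_neg (isFlat_ne4 h)]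

lemma ev1_s {l : L} (h : l.1 = 4) : ev1 l = t1 ^ ((η l : ℤˣ) : ℤ) := by
  cases hb : l.2 <;> simp [ev1, h, hb, η]

lemma Θ_ev {l : L} (h5 : l.1 ≠ 5) : Θ (ev l) = of2 (ev1 l) := by
  by_cases h4 : l.1 = 4
  · obtain ⟨i, b⟩ := l
    simp only at h4
    subst h4
    cases b
    · have : ev ((4 : Fin 6), false) = (γ 4)⁻¹ := by simp [ev]
      rw [this, map_inv, Θ_γ]
      have : fgen 4 = of2 t1⁻¹ := rfl
      rw [this, ← map_inv, inv_inv]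
      have : ev1 ((4 : Fin 6), false) = t1 := by simp [ev1]
      rw [this]
    · have : ev ((4 : Fin 6), true) = γ 4 := by simp [ev]
      rw [this, Θ_γ]
      have : ev1 ((4 : Fin 6), true) = t1⁻¹ := by simp [ev1]
      rw [this]
      rfl
  · rw [ev_flat (isFlat_of_ne h4 h5), Θι, ev1_flat (isFlat_of_ne h4 h5)]

lemma Θ_ev_t {l : L} (h5 : l.1 = 5) : Θ (ev l) = (t2 : G2) ^ ((η l : ℤˣ) : ℤ) := by
  obtain ⟨i, b⟩ := l
  simp only at h5
  subst h5
  cases b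
  · have : ev ((5 : Fin 6), false) = (γ 5)⁻¹ := by simp [ev]
    rw [this, map_inv, Θ_γ]
    have : fgen 5 = t2⁻¹ := rfl
    rw [this, inv_inv]
    simp [η]
  · have : ev ((5 : Fin 6), true) = γ 5 := by simp [ev]
    rw [this, Θ_γ]
    have : fgen 5 = t2⁻¹ := rfl
    rw [this]
    simp [η]

lemma evW1_flat {f : List L} (hf : ∀ l ∈ f, IsFlat l) :
    evW1 f = of1 (ofZ (sumVec f)) := by
  induction f with
  | nil => simp [evW1, sumVec_nil, ofZ]
  | cons l f ih =>
      rw [evW1_cons, ih (fun x hx => hf x (List.mem_cons_of_mem _ hx)),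
        ev1_flat (hf l (List.mem_cons_self)), sumVec_cons, ← ofZ_mul, map_mul]

lemma Θ_evW {f : List L} (h5 : ∀ l ∈ f, l.1 ≠ 5) : Θ (evW f) = of2 (evW1 f) := by
  induction f with
  | nil => simp [evW, evW1]
  | cons l f ih =>
      rw [evW_cons, evW1_cons, map_mul, map_mul,
        ih (fun x hx => h5 x (List.mem_cons_of_mem _ hx)),
        Θ_ev (h5 l (List.mem_cons_self))]

def p4 : L → Bool := fun l => decide (l.1 = 4)
def p5 : L → Bool := fun l => decide (l.1 = 5)

lemma prod1 {E : List (L × List L)} (hE : ∀ pr ∈ E, pr.1.1 = 4 ∧ ∀ l ∈ pr.2, IsFlat l) :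
    evW1 (cat E) = ((E.map (fun pr => ((η pr.1), ofZ (sumVec pr.2)))).map
        (fun x => (HNNExtension.t (G := Z2) (A := A1) (B := B1) (φ := φ1)) ^ (x.1 : ℤ)
          * HNNExtension.of x.2)).prod := by
  induction E with
  | nil => simp [cat_nil, evW1]
  | cons pr r ih =>
      obtain ⟨l, f⟩ := pr
      have h1 := (hE (l, f) (List.mem_cons_self)).1
      have h2 := (hE (l, f) (List.mem_cons_self)).2
      rw [cat_cons, evW1_cons, evW1_append, evW1_flat h2,
        ih (fun x hx => hE x (List.mem_cons_of_mem _ hx)), ev1_s h1]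
      simp only [List.map_cons, List.prod_cons]
      rw [← mul_assoc]
      rfl

lemma prod2 {E : List (L × List L)} (hE : ∀ pr ∈ E, pr.1.1 = 5 ∧ ∀ l ∈ pr.2, l.1 ≠ 5) :
    Θ (evW (cat E)) = ((E.map (fun pr => ((η pr.1), evW1 pr.2))).map
        (fun x => (HNNExtension.t (G := G1) (A := A2) (B := B2) (φ := ψ2)) ^ (x.1 : ℤ)
          * HNNExtension.of x.2)).prod := by
  induction E with
  | nil => simp [cat_nil, evW]
  | cons pr r ih =>
      obtain ⟨l, f⟩ := pr
      have h1 := (hE (l, f) (List.mem_cons_self)).1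
      have h2 := (hE (l, f) (List.mem_cons_self)).2
      rw [cat_cons, evW_cons, evW_append, map_mul, map_mul, Θ_ev_t h1, Θ_evW h2,
        ih (fun x hx => hE x (List.mem_cons_of_mem _ hx))]
      simp only [List.map_cons, List.prod_cons]
      rw [← mul_assoc]
      rfl

lemma britton1 {f : List L} (h5 : ∀ l ∈ f, l.1 ≠ 5) (hs : ∃ l ∈ f, l.1 = 4)
    (hchain : ((grp p4 f).2.map fun pr => ((η pr.1), ofZ (sumVec pr.2))).Chain'
      (fun a b => a.2 ∈ HNNExtension.toSubgroup A1 B1 a.1 → a.1 = b.1)) :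
    evW1 f ∉ (HNNExtension.of (G := Z2) (A := A1) (B := B1) (φ := φ1)).range := by
  intro hmem
  have hrec := grp_recon p4 f
  have hseg : ∀ pr ∈ (grp p4 f).2, pr.1.1 = 4 ∧ ∀ l ∈ pr.2, IsFlat l := by
    intro pr hpr
    refine ⟨by have := (grp_seg p4 f pr hpr).1; simpa [p4] using this, ?_⟩
    intro l hl
    refine isFlat_of_ne ?_ (h5 l (((grp_mem p4 f).2 pr hpr).2 l hl))
    have := (grp_seg p4 f pr hpr).2 l hl
    simpa [p4] using this
  have hhead : ∀ l ∈ (grp p4 f).1, IsFlat l := by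
    intro l hl
    refine isFlat_of_ne ?_ (h5 l ((grp_mem p4 f).1 l hl))
    have := grp_head p4 f l hl
    simpa [p4] using this
  obtain ⟨l0, hl0, hl04⟩ := hs
  have hEne : (grp p4 f).2 ≠ [] := grp_entries_ne p4 hl0 (by simpa [p4] using hl04)
  refine britton_aux (φ := φ1) (ofZ (sumVec (grp p4 f).1))
    ((grp p4 f).2.map fun pr => ((η pr.1), ofZ (sumVec pr.2))) hchain
    (fun h => hEne (List.map_eq_nil_iff.1 h)) ?_
  have key : evW1 f = HNNExtension.of (ofZ (sumVec (grp p4 f).1)) *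
      (((grp p4 f).2.map fun pr => ((η pr.1), ofZ (sumVec pr.2))).map
        (fun x => (HNNExtension.t (G := Z2) (A := A1) (B := B1) (φ := φ1)) ^ (x.1 : ℤ)
          * HNNExtension.of x.2)).prod := by
    conv_lhs => rw [← hrec]
    rw [evW1_append, evW1_flat hhead, prod1 hseg]
    rfl
  rw [← key]
  exact hmem

lemma britton2 {w : List L} (ht : ∃ l ∈ w, l.1 = 5)
    (hchain : ((grp p5 w).2.map fun pr => ((η pr.1), evW1 pr.2)).Chain'
      (fun a b => a.2 ∈ HNNExtension.toSubgroup A2 B2 a.1 → a.1 = b.1)) :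
    Θ (evW w) ∉ (HNNExtension.of (G := G1) (A := A2) (B := B2) (φ := ψ2)).range := by
  intro hmem
  have hrec := grp_recon p5 w
  have hseg : ∀ pr ∈ (grp p5 w).2, pr.1.1 = 5 ∧ ∀ l ∈ pr.2, l.1 ≠ 5 := by
    intro pr hpr
    refine ⟨by have := (grp_seg p5 w pr hpr).1; simpa [p5] using this, ?_⟩
    intro l hl
    have := (grp_seg p5 w pr hpr).2 l hl
    simpa [p5] using this
  have hhead : ∀ l ∈ (grp p5 w).1, l.1 ≠ 5 := by
    intro l hl
    have := grp_head p5 w l hl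
    simpa [p5] using this
  obtain ⟨l0, hl0, hl05⟩ := ht
  have hEne : (grp p5 w).2 ≠ [] := grp_entries_ne p5 hl0 (by simpa [p5] using hl05)
  refine britton_aux (φ := ψ2) (evW1 (grp p5 w).1)
    ((grp p5 w).2.map fun pr => ((η pr.1), evW1 pr.2)) hchain
    (fun h => hEne (List.map_eq_nil_iff.1 h)) ?_
  have key : Θ (evW w) = HNNExtension.of (evW1 (grp p5 w).1) *
      (((grp p5 w).2.map fun pr => ((η pr.1), evW1 pr.2)).map
        (fun x => (HNNExtension.t (G := G1) (A := A2) (B := B2) (φ := ψ2)) ^ (x.1 : ℤ)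
          * HNNExtension.of x.2)).prod := by
    conv_lhs => rw [← hrec]
    rw [evW_append, map_mul, Θ_evW hhead, prod2 hseg]
    rfl
  rw [← key]
  exact hmem


/-! ### windows inside flat words -/

def HasWin (f : List L) : Prop := ∃ A M B, f = A ++ M ++ B ∧ Shortenable M

lemma split_pair {x y : L} {f : List L} (hxy : x ≠ y) (hx : x ∈ f) (hy : y ∈ f) :
    ∃ A₁ u A₂ v A₃, f = A₁ ++ u :: (A₂ ++ v :: A₃) ∧ vec u + vec v = vec x + vec y
      ∧ (u = x ∨ u = y) ∧ (v = x ∨ v = y) := by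
  obtain ⟨S, T, rfl⟩ := List.append_of_mem hx
  rcases List.mem_append.1 hy with hyS | hyT
  · obtain ⟨P, Q, rfl⟩ := List.append_of_mem hyS
    refine ⟨P, y, Q, x, T, by simp, by rw [add_comm], Or.inr rfl, Or.inl rfl⟩
  · rcases List.mem_cons.1 hyT with rfl | hyT
    · exact absurd rfl hxy
    · obtain ⟨P, Q, rfl⟩ := List.append_of_mem hyT
      exact ⟨S, x, P, y, Q, by simp, rfl, Or.inl rfl, Or.inr rfl⟩

lemma split_same {x : L} {f : List L} (h : 2 ≤ f.count x) :
    ∃ A₁ A₂ A₃, f = A₁ ++ x :: (A₂ ++ x :: A₃) := by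
  have hx : x ∈ f := List.count_pos_iff.1 (by omega)
  obtain ⟨S, T, rfl⟩ := List.append_of_mem hx
  rw [List.count_append, List.count_cons_self] at h
  rcases Nat.lt_or_ge 0 (T.count x) with hT | hT
  · obtain ⟨P, Q, rfl⟩ := List.append_of_mem (List.count_pos_iff.1 hT)
    exact ⟨S, P, Q, by simp⟩
  · have hS : 0 < S.count x := by omega
    obtain ⟨P, Q, rfl⟩ := List.append_of_mem (List.count_pos_iff.1 hS)
    exact ⟨P, Q, T, by simp⟩

lemma split_triple {x y : L} {f : List L} (hxy : x ≠ y) (hx : x ∈ f)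
    (hy : 2 ≤ f.count y) :
    ∃ A₁ u A₂ v A₃ z A₄, f = A₁ ++ u :: (A₂ ++ v :: (A₃ ++ z :: A₄)) ∧
      vec u + vec v + vec z = vec x + vec y + vec y ∧
      (u = x ∨ u = y) ∧ (v = x ∨ v = y) ∧ (z = x ∨ z = y) := by
  obtain ⟨S, T, rfl⟩ := List.append_of_mem hx
  simp only [List.count_append, List.count_cons, beq_iff_eq, if_neg hxy, add_zero] at hy
  by_cases h1 : 2 ≤ T.count y
  · obtain ⟨B₁, B₂, B₃, rfl⟩ := split_same h1
    exact ⟨S, x, B₁, y, B₂, y, B₃, by simp, rfl, Or.inl rfl, Or.inr rfl, Or.inr rfl⟩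
  · by_cases h2 : 2 ≤ S.count y
    · obtain ⟨B₁, B₂, B₃, rfl⟩ := split_same h2
      refine ⟨B₁, y, B₂, y, B₃, x, T, by simp, by abel, Or.inr rfl, Or.inr rfl,
        Or.inl rfl⟩
    · have hS : 0 < S.count y := by omega
      have hT : 0 < T.count y := by omega
      obtain ⟨P, Q, rfl⟩ := List.append_of_mem (List.count_pos_iff.1 hS)
      obtain ⟨P', Q', rfl⟩ := List.append_of_mem (List.count_pos_iff.1 hT)
      refine ⟨P, y, Q, x, P', y, Q', by simp, by abel, Or.inr rfl, Or.inl rfl,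
        Or.inr rfl⟩

lemma win_of_split {f A M B : List L} (hEq : f = A ++ M ++ B) (h : Shortenable M) :
    HasWin f := ⟨A, M, B, hEq, h⟩

lemma win_pair {f : List L} (hf : ∀ l ∈ f, IsFlat l) {x y : L} (hxy : x ≠ y)
    (hx : x ∈ f) (hy : y ∈ f) {z : List L} (hzf : ∀ l ∈ z, IsFlat l)
    (hzs : sumVec z = vec x + vec y) (hzl : z.length ≤ 1) : HasWin f := by
  obtain ⟨A₁, u, A₂, v, A₃, hEq, hsum, _, _⟩ := split_pair hxy hx hy
  have hmem : ∀ l ∈ u :: (A₂ ++ v :: A₃), l ∈ f := by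
    intro l hl
    rw [hEq]
    simp only [List.mem_append, List.mem_cons] at hl ⊢
    tauto
  refine ⟨A₁, u :: (A₂ ++ [v]), A₃, ?_, ?_⟩
  · rw [hEq]
    simp
  · refine sh_pair ?_ ?_ ?_ hzf (by rw [hzs, hsum]) hzl
    · exact hf u (hmem u (List.mem_cons_self))
    · exact hf v (hmem v (by simp))
    · intro l hl
      exact hf l (hmem l (by simp [hl]))

lemma win_same {f : List L} (hf : ∀ l ∈ f, IsFlat l) {x : L}
    (hx : 2 ≤ f.count x) {z : List L} (hzf : ∀ l ∈ z, IsFlat l)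
    (hzs : sumVec z = vec x + vec x) (hzl : z.length ≤ 1) : HasWin f := by
  obtain ⟨A₁, A₂, A₃, hEq⟩ := split_same hx
  have hmem : ∀ l ∈ x :: (A₂ ++ x :: A₃), l ∈ f := by
    intro l hl
    rw [hEq]
    simp only [List.mem_append, List.mem_cons] at hl ⊢
    tauto
  refine ⟨A₁, x :: (A₂ ++ [x]), A₃, ?_, ?_⟩
  · rw [hEq]
    simp
  · refine sh_pair ?_ ?_ ?_ hzf hzs hzl
    · exact hf x (hmem x (List.mem_cons_self))
    · exact hf x (hmem x (List.mem_cons_self))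
    · intro l hl
      exact hf l (hmem l (by simp [hl]))


lemma win_triple {f : List L} (hf : ∀ l ∈ f, IsFlat l) {x y : L} (hxy : x ≠ y)
    (hx : x ∈ f) (hy : 2 ≤ f.count y) {z : List L} (hzf : ∀ l ∈ z, IsFlat l)
    (hzs : sumVec z = vec x + vec y + vec y) (hzl : z.length ≤ 2) : HasWin f := by
  obtain ⟨A₁, u, A₂, v, A₃, zz, A₄, hEq, hsum, _, _, _⟩ := split_triple hxy hx hy
  have hmem : ∀ l ∈ u :: (A₂ ++ v :: (A₃ ++ [zz])), l ∈ f := by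
    intro l hl
    rw [hEq]
    simp only [List.mem_append, List.mem_cons, List.mem_singleton] at hl ⊢
    tauto
  refine ⟨A₁, u :: (A₂ ++ v :: (A₃ ++ [zz])), A₄, ?_, ?_⟩
  · rw [hEq]
    simp
  · refine sh_triple ?_ ?_ ?_ ?_ ?_ hzf (by rw [hzs, hsum]) hzl
    · exact hf u (hmem u (List.mem_cons_self))
    · exact hf v (hmem v (by simp))
    · exact hf zz (hmem zz (by simp))
    · intro l hl
      exact hf l (hmem l (by simp [hl]))
    · intro l hl
      exact hf l (hmem l (by simp [hl]))


/-! ### counting letters in flat words -/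

lemma sumVec_coords {f : List L} (hf : ∀ l ∈ f, IsFlat l) :
    (sumVec f).1 = ((f.count ((0:Fin 6),true) : ℤ) - f.count ((0:Fin 6),false))
      + ((f.count ((2:Fin 6),true) : ℤ) - f.count ((2:Fin 6),false))
      + 2*((f.count ((3:Fin 6),true) : ℤ) - f.count ((3:Fin 6),false))
    ∧ (sumVec f).2 = ((f.count ((1:Fin 6),true) : ℤ) - f.count ((1:Fin 6),false))
      + ((f.count ((2:Fin 6),true) : ℤ) - f.count ((2:Fin 6),false))
      + 2*((f.count ((3:Fin 6),true) : ℤ) - f.count ((3:Fin 6),false)) := by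
  induction f with
  | nil => simp [sumVec_nil]
  | cons l f ih =>
      obtain ⟨ih1, ih2⟩ := ih (fun x hx => hf x (List.mem_cons_of_mem _ hx))
      have hl := hf l (List.mem_cons_self)
      obtain ⟨i, b⟩ := l
      have bv0 : bvec 0 = ((1:ℤ),(0:ℤ)) := rfl
      have bv1 : bvec 1 = ((0:ℤ),(1:ℤ)) := rfl
      have bv2 : bvec 2 = ((1:ℤ),(1:ℤ)) := rfl
      have bv3 : bvec 3 = ((2:ℤ),(2:ℤ)) := rfl
      rcases hl with h | h | h | h <;> simp only at h <;> subst h <;> cases b <;>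
        · constructor <;>
          · simp (config := { decide := true }) only [List.count_cons, sumVec_cons, vec,
              bv0, bv1, bv2, bv3, Bool.false_eq_true, if_true, if_false,
              Prod.fst_add, Prod.snd_add, Prod.fst_neg, Prod.snd_neg]
            push_cast
            try rw [ih1]
            try rw [ih2]
            ring
  
lemma no_pair {f : List L} (hf : ∀ l ∈ f, IsFlat l) (hW : ¬ HasWin f) {x y : L}
    {z : List L} (hxy : x ≠ y) (hzf : ∀ l ∈ z, IsFlat l)
    (hzs : sumVec z = vec x + vec y) (hzl : z.length ≤ 1) :
    f.count x = 0 ∨ f.count y = 0 := by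
  by_contra hc
  push_neg at hc
  exact hW (win_pair hf hxy (List.count_pos_iff.1 (by omega))
    (List.count_pos_iff.1 (by omega)) hzf hzs hzl)

lemma no_same {f : List L} (hf : ∀ l ∈ f, IsFlat l) (hW : ¬ HasWin f) {x : L}
    {z : List L} (hzf : ∀ l ∈ z, IsFlat l)
    (hzs : sumVec z = vec x + vec x) (hzl : z.length ≤ 1) :
    f.count x ≤ 1 := by
  by_contra hc
  push_neg at hc
  exact hW (win_same hf hc hzf hzs hzl)

lemma no_trip {f : List L} (hf : ∀ l ∈ f, IsFlat l) (hW : ¬ HasWin f) {x y : L}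
    {z : List L} (hxy : x ≠ y) (hzf : ∀ l ∈ z, IsFlat l)
    (hzs : sumVec z = vec x + vec y + vec y) (hzl : z.length ≤ 2) :
    f.count x = 0 ∨ f.count y ≤ 1 := by
  by_contra hc
  push_neg at hc
  exact hW (win_triple hf hxy (List.count_pos_iff.1 (by omega)) hc.2 hzf hzs hzl)


lemma flat0 : ∀ l ∈ ([] : List L), IsFlat l := by
  intro l hl
  exact absurd hl (List.not_mem_nil)

lemma flat1 {x : L} (hx : IsFlat x) : ∀ l ∈ [x], IsFlat l := by
  intro l hl
  rw [List.mem_singleton.1 hl]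
  exact hx

lemma flat2 {x y : L} (hx : IsFlat x) (hy : IsFlat y) : ∀ l ∈ [x, y], IsFlat l := by
  intro l hl
  rcases List.mem_cons.1 hl with rfl | hl
  · exact hx
  · rw [List.mem_singleton.1 hl]
    exact hy

lemma min_zero_of {a b : ℕ} (h : a = 0 ∨ b = 0) : min a b = 0 := by
  rcases h with h | h <;> omega

lemma min_pred_of {a b : ℕ} (h : a = 0 ∨ b ≤ 1) : min a (b-1) = 0 := by
  rcases h with h | h <;> omega

lemma flat_a {f : List L} (hf : ∀ l ∈ f, IsFlat l) (h2 : (sumVec f).2 = 0) :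
    HasWin f ∨ ∃ σ : Bool, ∀ l ∈ f, l = ((0:Fin 6), σ) := by
  by_cases hW : HasWin f
  · exact Or.inl hW
  right
  obtain ⟨h1eq, h2eq⟩ := sumVec_coords hf
  rw [h2eq] at h2
  have fInv0 := min_zero_of (no_pair hf hW (x := ((0:Fin 6),true)) (y := ((0:Fin 6),false))
    (z := []) (by decide) flat0 (by decide) (by decide))
  have fInv1 := min_zero_of (no_pair hf hW (x := ((1:Fin 6),true)) (y := ((1:Fin 6),false))
    (z := []) (by decide) flat0 (by decide) (by decide))
  have fInv2 := min_zero_of (no_pair hf hW (x := ((2:Fin 6),true)) (y := ((2:Fin 6),false))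
    (z := []) (by decide) flat0 (by decide) (by decide))
  have fInv3 := min_zero_of (no_pair hf hW (x := ((3:Fin 6),true)) (y := ((3:Fin 6),false))
    (z := []) (by decide) flat0 (by decide) (by decide))
  have fcb' := min_zero_of (no_pair hf hW (x := ((2:Fin 6),true)) (y := ((1:Fin 6),false))
    (z := [((0:Fin 6),true)]) (by decide) (flat1 (by decide)) (by decide) (by decide))
  have fc'b := min_zero_of (no_pair hf hW (x := ((2:Fin 6),false)) (y := ((1:Fin 6),true))
    (z := [((0:Fin 6),false)]) (by decide) (flat1 (by decide)) (by decide) (by decide))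
  have fcd' := min_zero_of (no_pair hf hW (x := ((2:Fin 6),true)) (y := ((3:Fin 6),false))
    (z := [((2:Fin 6),false)]) (by decide) (flat1 (by decide)) (by decide) (by decide))
  have fc'd := min_zero_of (no_pair hf hW (x := ((2:Fin 6),false)) (y := ((3:Fin 6),true))
    (z := [((2:Fin 6),true)]) (by decide) (flat1 (by decide)) (by decide) (by decide))
  have fcc := no_same hf hW (x := ((2:Fin 6),true)) (z := [((3:Fin 6),true)])
    (flat1 (by decide)) (by decide) (by decide)
  have fc'c' := no_same hf hW (x := ((2:Fin 6),false)) (z := [((3:Fin 6),false)])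
    (flat1 (by decide)) (by decide) (by decide)
  have ftrip := min_pred_of (no_trip hf hW (x := ((3:Fin 6),true)) (y := ((1:Fin 6),false))
    (z := [((0:Fin 6),true),((0:Fin 6),true)]) (by decide) (flat2 (by decide) (by decide)) (by decide) (by decide))
  have ftrip' := min_pred_of (no_trip hf hW (x := ((3:Fin 6),false)) (y := ((1:Fin 6),true))
    (z := [((0:Fin 6),false),((0:Fin 6),false)]) (by decide) (flat2 (by decide) (by decide)) (by decide) (by decide))
  have hz : f.count ((1:Fin 6),true) = 0 ∧ f.count ((1:Fin 6),false) = 0 ∧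
      f.count ((2:Fin 6),true) = 0 ∧ f.count ((2:Fin 6),false) = 0 ∧
      f.count ((3:Fin 6),true) = 0 ∧ f.count ((3:Fin 6),false) = 0 := by
    omega
  obtain ⟨hB, hB', hC, hC', hD, hD'⟩ := hz
  have hend : ∀ σ : Bool, f.count ((0:Fin 6), !σ) = 0 → ∀ l ∈ f, l = ((0:Fin 6), σ) := by
    intro σ hσ l hl
    cases σ <;> simp only [Bool.not_true, Bool.not_false] at hσ <;>
      (obtain ⟨i, b⟩ := l
       rcases hf _ hl with h|h|h|h <;> simp only at h <;> subst h <;> cases b <;>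
        first
          | rfl
          | exact absurd (List.count_pos_iff.2 hl) (by omega))
  rcases Nat.eq_zero_or_pos (f.count ((0:Fin 6),false)) with h0 | h0
  · exact ⟨true, hend true (by simpa using h0)⟩
  · refine ⟨false, hend false ?_⟩
    simp only [Bool.not_false]
    omega

lemma flat_b {f : List L} (hf : ∀ l ∈ f, IsFlat l) (h1 : (sumVec f).1 = 0) :
    HasWin f ∨ ∃ σ : Bool, ∀ l ∈ f, l = ((1:Fin 6), σ) := by
  by_cases hW : HasWin f
  · exact Or.inl hW
  right
  obtain ⟨h1eq, h2eq⟩ := sumVec_coords hf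
  rw [h1eq] at h1
  have fInv0 := min_zero_of (no_pair hf hW (x := ((0:Fin 6),true)) (y := ((0:Fin 6),false))
    (z := []) (by decide) flat0 (by decide) (by decide))
  have fInv1 := min_zero_of (no_pair hf hW (x := ((1:Fin 6),true)) (y := ((1:Fin 6),false))
    (z := []) (by decide) flat0 (by decide) (by decide))
  have fInv2 := min_zero_of (no_pair hf hW (x := ((2:Fin 6),true)) (y := ((2:Fin 6),false))
    (z := []) (by decide) flat0 (by decide) (by decide))
  have fInv3 := min_zero_of (no_pair hf hW (x := ((3:Fin 6),true)) (y := ((3:Fin 6),false))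
    (z := []) (by decide) flat0 (by decide) (by decide))
  have fca' := min_zero_of (no_pair hf hW (x := ((2:Fin 6),true)) (y := ((0:Fin 6),false))
    (z := [((1:Fin 6),true)]) (by decide) (flat1 (by decide)) (by decide) (by decide))
  have fc'a := min_zero_of (no_pair hf hW (x := ((2:Fin 6),false)) (y := ((0:Fin 6),true))
    (z := [((1:Fin 6),false)]) (by decide) (flat1 (by decide)) (by decide) (by decide))
  have fcd' := min_zero_of (no_pair hf hW (x := ((2:Fin 6),true)) (y := ((3:Fin 6),false))
    (z := [((2:Fin 6),false)]) (by decide) (flat1 (by decide)) (by decide) (by decide))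
  have fc'd := min_zero_of (no_pair hf hW (x := ((2:Fin 6),false)) (y := ((3:Fin 6),true))
    (z := [((2:Fin 6),true)]) (by decide) (flat1 (by decide)) (by decide) (by decide))
  have fcc := no_same hf hW (x := ((2:Fin 6),true)) (z := [((3:Fin 6),true)])
    (flat1 (by decide)) (by decide) (by decide)
  have fc'c' := no_same hf hW (x := ((2:Fin 6),false)) (z := [((3:Fin 6),false)])
    (flat1 (by decide)) (by decide) (by decide)
  have ftrip := min_pred_of (no_trip hf hW (x := ((3:Fin 6),true)) (y := ((0:Fin 6),false))
    (z := [((1:Fin 6),true),((1:Fin 6),true)]) (by decide) (flat2 (by decide) (by decide)) (by decide) (by decide))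
  have ftrip' := min_pred_of (no_trip hf hW (x := ((3:Fin 6),false)) (y := ((0:Fin 6),true))
    (z := [((1:Fin 6),false),((1:Fin 6),false)]) (by decide) (flat2 (by decide) (by decide)) (by decide) (by decide))
  have hz : f.count ((0:Fin 6),true) = 0 ∧ f.count ((0:Fin 6),false) = 0 ∧
      f.count ((2:Fin 6),true) = 0 ∧ f.count ((2:Fin 6),false) = 0 ∧
      f.count ((3:Fin 6),true) = 0 ∧ f.count ((3:Fin 6),false) = 0 := by
    omega
  obtain ⟨hA, hA', hC, hC', hD, hD'⟩ := hz
  have hend : ∀ σ : Bool, f.count ((1:Fin 6), !σ) = 0 → ∀ l ∈ f, l = ((1:Fin 6), σ) := by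
    intro σ hσ l hl
    cases σ <;> simp only [Bool.not_true, Bool.not_false] at hσ <;>
      (obtain ⟨i, b⟩ := l
       rcases hf _ hl with h|h|h|h <;> simp only at h <;> subst h <;> cases b <;>
        first
          | rfl
          | exact absurd (List.count_pos_iff.2 hl) (by omega))
  rcases Nat.eq_zero_or_pos (f.count ((1:Fin 6),false)) with h0 | h0
  · exact ⟨true, hend true (by simpa using h0)⟩
  · refine ⟨false, hend false ?_⟩
    simp only [Bool.not_false]
    omega

lemma flat_d {f : List L} (hf : ∀ l ∈ f, IsFlat l)
    (hdiag : (sumVec f).1 = (sumVec f).2) (heven : ∃ k : ℤ, (sumVec f).1 = 2*k) :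
    HasWin f ∨ ∃ σ : Bool, ∀ l ∈ f, l = ((3:Fin 6), σ) := by
  by_cases hW : HasWin f
  · exact Or.inl hW
  right
  obtain ⟨h1eq, h2eq⟩ := sumVec_coords hf
  obtain ⟨k, hk⟩ := heven
  rw [h1eq, h2eq] at hdiag
  rw [h1eq] at hk
  have fInv0 := min_zero_of (no_pair hf hW (x := ((0:Fin 6),true)) (y := ((0:Fin 6),false))
    (z := []) (by decide) flat0 (by decide) (by decide))
  have fInv1 := min_zero_of (no_pair hf hW (x := ((1:Fin 6),true)) (y := ((1:Fin 6),false))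
    (z := []) (by decide) flat0 (by decide) (by decide))
  have fInv2 := min_zero_of (no_pair hf hW (x := ((2:Fin 6),true)) (y := ((2:Fin 6),false))
    (z := []) (by decide) flat0 (by decide) (by decide))
  have fInv3 := min_zero_of (no_pair hf hW (x := ((3:Fin 6),true)) (y := ((3:Fin 6),false))
    (z := []) (by decide) flat0 (by decide) (by decide))
  have fab := min_zero_of (no_pair hf hW (x := ((0:Fin 6),true)) (y := ((1:Fin 6),true))
    (z := [((2:Fin 6),true)]) (by decide) (flat1 (by decide)) (by decide) (by decide))
  have fab' := min_zero_of (no_pair hf hW (x := ((0:Fin 6),false)) (y := ((1:Fin 6),false))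
    (z := [((2:Fin 6),false)]) (by decide) (flat1 (by decide)) (by decide) (by decide))
  have fcc := no_same hf hW (x := ((2:Fin 6),true)) (z := [((3:Fin 6),true)])
    (flat1 (by decide)) (by decide) (by decide)
  have fc'c' := no_same hf hW (x := ((2:Fin 6),false)) (z := [((3:Fin 6),false)])
    (flat1 (by decide)) (by decide) (by decide)
  have hz : f.count ((0:Fin 6),true) = 0 ∧ f.count ((0:Fin 6),false) = 0 ∧
      f.count ((1:Fin 6),true) = 0 ∧ f.count ((1:Fin 6),false) = 0 ∧
      f.count ((2:Fin 6),true) = 0 ∧ f.count ((2:Fin 6),false) = 0 := by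
    omega
  obtain ⟨hA, hA', hB, hB', hC, hC'⟩ := hz
  have hend : ∀ σ : Bool, f.count ((3:Fin 6), !σ) = 0 → ∀ l ∈ f, l = ((3:Fin 6), σ) := by
    intro σ hσ l hl
    cases σ <;> simp only [Bool.not_true, Bool.not_false] at hσ <;>
      (obtain ⟨i, b⟩ := l
       rcases hf _ hl with h|h|h|h <;> simp only at h <;> subst h <;> cases b <;>
        first
          | rfl
          | exact absurd (List.count_pos_iff.2 hl) (by omega))
  rcases Nat.eq_zero_or_pos (f.count ((3:Fin 6),false)) with h0 | h0
  · exact ⟨true, hend true (by simpa using h0)⟩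
  · refine ⟨false, hend false ?_⟩
    simp only [Bool.not_false]
    omega

lemma flat_zero {f : List L} (hf : ∀ l ∈ f, IsFlat l) (hne : f ≠ [])
    (h0 : sumVec f = 0) : HasWin f := by
  rcases flat_a hf (by rw [h0]; rfl) with hW | ⟨σ, hσ⟩
  · exact hW
  exfalso
  obtain ⟨h1eq, _⟩ := sumVec_coords hf
  have h1 : (sumVec f).1 = 0 := by rw [h0]; rfl
  rw [h1eq] at h1
  have hother : ∀ b : Bool, b ≠ σ → f.count ((0:Fin 6), b) = 0 := by
    intro b hb
    rw [List.count_eq_zero]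
    intro hmem
    exact hb (by have := hσ _ hmem; simp at this; tauto)
  have h23 : f.count ((2:Fin 6),true) = 0 ∧ f.count ((2:Fin 6),false) = 0 ∧
      f.count ((3:Fin 6),true) = 0 ∧ f.count ((3:Fin 6),false) = 0 := by
    refine ⟨?_, ?_, ?_, ?_⟩ <;>
      · rw [List.count_eq_zero]
        intro hmem
        have := hσ _ hmem
        simp at this
  have hσ0 : f.count ((0:Fin 6), σ) = 0 := by
    cases σ
    · have := hother true (by simp)
      omega
    · have := hother false (by simp)
      omega
  obtain ⟨l, hl⟩ := List.exists_mem_of_ne_nil f hne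
  have := hσ l hl
  subst this
  have := List.count_pos_iff.2 hl
  omega


/-! ### push lemmas and pinch windows -/

lemma swap_inv {a s d : GW} (h : a * s = s * d) : a⁻¹ * s = s * d⁻¹ := by
  calc a⁻¹ * s = a⁻¹ * (s * d) * d⁻¹ := by group
    _ = a⁻¹ * (a * s) * d⁻¹ := by rw [h]
    _ = s * d⁻¹ := by group

lemma base_as : γ 0 * γ 4 = γ 4 * γ 3 := by
  rw [← rel4]; group

lemma base_ds : γ 3 * (γ 4)⁻¹ = (γ 4)⁻¹ * γ 0 := by
  rw [← rel4]; group

lemma base_bt : γ 1 * γ 5 = γ 5 * γ 3 := by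
  rw [← rel5]; group

lemma base_dt : γ 3 * (γ 5)⁻¹ = (γ 5)⁻¹ * γ 1 := by
  rw [← rel5]; group

lemma push_as (σ : Bool) :
    ev ((0:Fin 6),σ) * ev ((4:Fin 6),true) = ev ((4:Fin 6),true) * ev ((3:Fin 6),σ) := by
  cases σ
  · simpa [ev] using swap_inv base_as
  · simpa [ev] using base_as

lemma push_ds (σ : Bool) :
    ev ((3:Fin 6),σ) * ev ((4:Fin 6),false) = ev ((4:Fin 6),false) * ev ((0:Fin 6),σ) := by
  cases σ
  · simpa [ev] using swap_inv base_ds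
  · simpa [ev] using base_ds

lemma push_bt (σ : Bool) :
    ev ((1:Fin 6),σ) * ev ((5:Fin 6),true) = ev ((5:Fin 6),true) * ev ((3:Fin 6),σ) := by
  cases σ
  · simpa [ev] using swap_inv base_bt
  · simpa [ev] using base_bt

lemma push_dt (σ : Bool) :
    ev ((3:Fin 6),σ) * ev ((5:Fin 6),false) = ev ((5:Fin 6),false) * ev ((1:Fin 6),σ) := by
  cases σ
  · simpa [ev] using swap_inv base_dt
  · simpa [ev] using base_dt

lemma ev_inv_pair (i : Fin 6) : ev (i, false) = (ev (i, true))⁻¹ := by simp [ev]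

lemma ev_inv_pair' (i : Fin 6) : ev (i, true) = (ev (i, false))⁻¹ := by simp [ev]

/-! ### subgroup membership characterisations -/

lemma memA1 {v : ℤ × ℤ} (h : ofZ v ∈ A1) : v.2 = 0 := by
  obtain ⟨n, hn⟩ := h
  have h2 : Multiplicative.ofAdd ((Multiplicative.toAdd n : ℤ), (0:ℤ)) =
      Multiplicative.ofAdd v := hn
  have := Multiplicative.ofAdd.injective h2
  rw [← this]

lemma memB1 {v : ℤ × ℤ} (h : ofZ v ∈ B1) : v.1 = v.2 ∧ ∃ k : ℤ, v.1 = 2 * k := by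
  obtain ⟨n, hn⟩ := h
  have h2 : Multiplicative.ofAdd ((2 * (Multiplicative.toAdd n : ℤ)),
      (2 * (Multiplicative.toAdd n : ℤ))) = Multiplicative.ofAdd v := hn
  have := Multiplicative.ofAdd.injective h2
  rw [← this]
  exact ⟨rfl, Multiplicative.toAdd n, rfl⟩

lemma memA2 {v : ℤ × ℤ} (h : of1 (ofZ v) ∈ A2) : v.1 = 0 := by
  obtain ⟨n, hn⟩ := h
  have h1 : mB n = ofZ v := of1_inj hn
  have h2 : Multiplicative.ofAdd ((0:ℤ), (Multiplicative.toAdd n : ℤ)) =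
      Multiplicative.ofAdd v := h1
  have := Multiplicative.ofAdd.injective h2
  rw [← this]

lemma memB2 {v : ℤ × ℤ} (h : of1 (ofZ v) ∈ B2) :
    v.1 = v.2 ∧ ∃ k : ℤ, v.1 = 2 * k := by
  obtain ⟨n, hn⟩ := h
  have h1 : mD n = ofZ v := of1_inj hn
  have h2 : Multiplicative.ofAdd ((2 * (Multiplicative.toAdd n : ℤ)),
      (2 * (Multiplicative.toAdd n : ℤ))) = Multiplicative.ofAdd v := h1
  have := Multiplicative.ofAdd.injective h2
  rw [← this]
  exact ⟨rfl, Multiplicative.toAdd n, rfl⟩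

lemma A2_le_range : A2 ≤ (HNNExtension.of (G := Z2) (A := A1) (B := B1) (φ := φ1)).range := by
  rintro x ⟨n, rfl⟩
  exact ⟨mB n, rfl⟩

lemma B2_le_range : B2 ≤ (HNNExtension.of (G := Z2) (A := A1) (B := B1) (φ := φ1)).range := by
  rintro x ⟨n, rfl⟩
  exact ⟨mD n, rfl⟩

/-! ### misc helpers -/

lemma chain'_of_adjacent {α : Type*} {R : α → α → Prop} (E : List α)
    (h : ∀ E₁ a b E₂, E = E₁ ++ a :: b :: E₂ → R a b) : E.Chain' R := by
  induction E with
  | nil => exact List.isChain_nil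
  | cons x E ih =>
      cases E with
      | nil => exact List.isChain_singleton _
      | cons y E' =>
          rw [List.Chain', List.isChain_cons_cons]
          refine ⟨h [] x y E' rfl, ih ?_⟩
          intro E₁ a b E₂ hE
          exact h (x :: E₁) a b E₂ (by rw [List.cons_append, hE])

lemma hasWin_lift {w A f B : List L} (hEq : w = A ++ f ++ B) (h : HasWin f) :
    HasWin w := by
  obtain ⟨F₁, M, F₂, hf, hM⟩ := h
  exact ⟨A ++ F₁, M, F₂ ++ B, by rw [hEq, hf]; simp, hM⟩

lemma hasWin_pinch {w A B f : List L} {e' e x x' : L}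
    (hEq : w = A ++ (e' :: (f ++ [e])) ++ B)
    (hrep : ∀ m ∈ f, m = x)
    (hinv : ev e' = (ev e)⁻¹) (hpush : ev x * ev e = ev e * ev x') : HasWin w := by
  refine ⟨A, e' :: (f ++ [e]), B, hEq, ?_⟩
  have : f = List.replicate f.length x := List.eq_replicate_of_mem hrep
  rw [this]
  exact sh_pinch f.length hinv hpush


lemma grp_split_eq (p : L → Bool) (w : List L) {E₁ E₂ : List (L × List L)}
    {a b : L × List L} (hsplit : (grp p w).2 = E₁ ++ a :: b :: E₂) :
    w = ((grp p w).1 ++ cat E₁ ++ [a.1]) ++ a.2 ++ ([b.1] ++ b.2 ++ cat E₂) := by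
  conv_lhs => rw [← grp_recon p w]
  rw [hsplit, cat_append]
  rw [show (a :: b :: E₂) = ((a.1, a.2) :: (b.1, b.2) :: E₂) from rfl, cat_cons, cat_cons]
  simp [List.append_assoc]

lemma level1 {f : List L} (hf5 : ∀ l ∈ f, l.1 ≠ 5) (hWf : ¬ HasWin f)
    (hs : ∃ l ∈ f, l.1 = 4) :
    evW1 f ∉ (HNNExtension.of (G := Z2) (A := A1) (B := B1) (φ := φ1)).range := by
  apply britton1 hf5 hs
  rw [List.Chain', List.isChain_map]
  apply chain'_of_adjacent
  intro E₁ a b E₂ hsplit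
  intro hmem
  by_contra hne
  have hamem : a ∈ (grp p4 f).2 := by rw [hsplit]; simp
  have hbmem : b ∈ (grp p4 f).2 := by rw [hsplit]; simp
  have hpos := grp_split_eq p4 f hsplit
  have ha4 : a.1.1 = 4 := by simpa [p4] using (grp_seg p4 f a hamem).1
  have hb4 : b.1.1 = 4 := by simpa [p4] using (grp_seg p4 f b hbmem).1
  have haflat : ∀ l ∈ a.2, IsFlat l := by
    intro l hl
    refine isFlat_of_ne ?_ (hf5 l (((grp_mem p4 f).2 a hamem).2 l hl))
    have := (grp_seg p4 f a hamem).2 l hl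
    simpa [p4] using this
  have hWa : ¬ HasWin a.2 := fun h => hWf (hasWin_lift hpos h)
  cases hba : a.1.2 with
  | false =>
      have hη : η a.1 = 1 := by simp [η, hba]
      rw [hη, HNNExtension.toSubgroup_one] at hmem
      have hv := memA1 hmem
      rcases flat_a haflat hv with hwin | ⟨σ, hσ⟩
      · exact hWa hwin
      · have hbb : b.1.2 = true := by
          cases hbb : b.1.2
          · exact absurd (by simp [η, hba, hbb]) hne
          · rfl
        have ha1 : a.1 = ((4:Fin 6), false) := Prod.ext ha4 hba
        have hb1 : b.1 = ((4:Fin 6), true) := Prod.ext hb4 hbb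
        refine hWf (hasWin_pinch (x := ((0:Fin 6),σ)) (x' := ((3:Fin 6),σ))
          (A := (grp p4 f).1 ++ cat E₁) (B := b.2 ++ cat E₂)
          (e' := a.1) (e := b.1) ?_ hσ ?_ ?_)
        · conv_lhs => rw [hpos]
          simp [List.append_assoc]
        · rw [ha1, hb1]
          exact ev_inv_pair 4
        · rw [hb1]
          exact push_as σ
  | true =>
      have hη : η a.1 = -1 := by simp [η, hba]
      rw [hη, HNNExtension.toSubgroup_neg_one] at hmem
      obtain ⟨hd, he⟩ := memB1 hmem
      rcases flat_d haflat hd he with hwin | ⟨σ, hσ⟩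
      · exact hWa hwin
      · have hbb : b.1.2 = false := by
          cases hbb : b.1.2
          · rfl
          · exact absurd (by simp [η, hba, hbb]) hne
        have ha1 : a.1 = ((4:Fin 6), true) := Prod.ext ha4 hba
        have hb1 : b.1 = ((4:Fin 6), false) := Prod.ext hb4 hbb
        refine hWf (hasWin_pinch (x := ((3:Fin 6),σ)) (x' := ((0:Fin 6),σ))
          (A := (grp p4 f).1 ++ cat E₁) (B := b.2 ++ cat E₂)
          (e' := a.1) (e := b.1) ?_ hσ ?_ ?_)
        · conv_lhs => rw [hpos]
          simp [List.append_assoc]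
        · rw [ha1, hb1]
          exact ev_inv_pair' 4
        · rw [hb1]
          exact push_ds σ

theorem shorten {w : List L} (hne : w ≠ []) (hval : evW w = 1) :
    ∃ u, evW u = evW w ∧ u.length < w.length ∧ Tracks 43 w u := by
  by_contra hcon
  push_neg at hcon
  have hW : ¬ HasWin w := by
    rintro ⟨A, M, B, hEq, hM⟩
    obtain ⟨u, h1, h2, h3⟩ := shortenable_embed hM A B
    rw [← hEq] at h1 h2 h3
    exact absurd h3 (hcon u h1 h2)
  by_cases ht : ∃ l ∈ w, l.1 = 5
  · -- there is a `t`-letter: Britton at level 2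
    have hchain : ((grp p5 w).2.map fun pr => ((η pr.1), evW1 pr.2)).Chain'
        (fun a b => a.2 ∈ HNNExtension.toSubgroup A2 B2 a.1 → a.1 = b.1) := by
      rw [List.Chain', List.isChain_map]
      apply chain'_of_adjacent
      intro E₁ a b E₂ hsplit
      intro hmem
      by_contra hne2
      have hamem : a ∈ (grp p5 w).2 := by rw [hsplit]; simp
      have hbmem : b ∈ (grp p5 w).2 := by rw [hsplit]; simp
      have hpos := grp_split_eq p5 w hsplit
      have ha5 : a.1.1 = 5 := by simpa [p5] using (grp_seg p5 w a hamem).1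
      have hb5 : b.1.1 = 5 := by simpa [p5] using (grp_seg p5 w b hbmem).1
      have ha2no5 : ∀ l ∈ a.2, l.1 ≠ 5 := by
        intro l hl
        have := (grp_seg p5 w a hamem).2 l hl
        simpa [p5] using this
      have hWa : ¬ HasWin a.2 := fun h => hW (hasWin_lift hpos h)
      by_cases hs : ∃ l ∈ a.2, l.1 = 4
      · -- the segment contains an `s`: its value is not in the base group
        have hnotin := level1 ha2no5 hWa hs
        cases hba : a.1.2
        · rw [show η a.1 = 1 by simp [η, hba], HNNExtension.toSubgroup_one] at hmem
          exact hnotin (A2_le_range hmem)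
        · rw [show η a.1 = -1 by simp [η, hba],
            HNNExtension.toSubgroup_neg_one] at hmem
          exact hnotin (B2_le_range hmem)
      · -- the segment is flat
        have haflat : ∀ l ∈ a.2, IsFlat l := by
          intro l hl
          push_neg at hs
          exact isFlat_of_ne (hs l hl) (ha2no5 l hl)
        have hval1 : evW1 a.2 = of1 (ofZ (sumVec a.2)) := evW1_flat haflat
        cases hba : a.1.2 with
        | false =>
            have hη : η a.1 = 1 := by simp [η, hba]
            rw [hη, HNNExtension.toSubgroup_one, hval1] at hmem
            have hv := memA2 hmem
            rcases flat_b haflat hv with hwin | ⟨σ, hσ⟩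
            · exact hWa hwin
            · have hbb : b.1.2 = true := by
                cases hbb : b.1.2
                · exact absurd (by simp [η, hba, hbb]) hne2
                · rfl
              have ha1 : a.1 = ((5:Fin 6), false) := Prod.ext ha5 hba
              have hb1 : b.1 = ((5:Fin 6), true) := Prod.ext hb5 hbb
              refine hW (hasWin_pinch (x := ((1:Fin 6),σ)) (x' := ((3:Fin 6),σ))
                (A := (grp p5 w).1 ++ cat E₁) (B := b.2 ++ cat E₂)
                (e' := a.1) (e := b.1) ?_ hσ ?_ ?_)
              · conv_lhs => rw [hpos]
                simp [List.append_assoc]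
              · rw [ha1, hb1]
                exact ev_inv_pair 5
              · rw [hb1]
                exact push_bt σ
        | true =>
            have hη : η a.1 = -1 := by simp [η, hba]
            rw [hη, HNNExtension.toSubgroup_neg_one, hval1] at hmem
            obtain ⟨hd, he⟩ := memB2 hmem
            rcases flat_d haflat hd he with hwin | ⟨σ, hσ⟩
            · exact hWa hwin
            · have hbb : b.1.2 = false := by
                cases hbb : b.1.2
                · rfl
                · exact absurd (by simp [η, hba, hbb]) hne2
              have ha1 : a.1 = ((5:Fin 6), true) := Prod.ext ha5 hba
              have hb1 : b.1 = ((5:Fin 6), false) := Prod.ext hb5 hbb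
              refine hW (hasWin_pinch (x := ((3:Fin 6),σ)) (x' := ((1:Fin 6),σ))
                (A := (grp p5 w).1 ++ cat E₁) (B := b.2 ++ cat E₂)
                (e' := a.1) (e := b.1) ?_ hσ ?_ ?_)
              · conv_lhs => rw [hpos]
                simp [List.append_assoc]
              · rw [ha1, hb1]
                exact ev_inv_pair' 5
              · rw [hb1]
                exact push_dt σ
    have hnotin := britton2 ht hchain
    apply hnotin
    rw [hval, map_one]
    exact one_mem _
  · -- no `t`-letters
    push_neg at ht
    by_cases hs : ∃ l ∈ w, l.1 = 4
    · have hnotin := level1 ht hW hs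
      apply hnotin
      have h1 : Θ (evW w) = of2 (evW1 w) := Θ_evW ht
      rw [hval, map_one] at h1
      have h2 : evW1 w = 1 := of2_inj (by rw [map_one, ← h1])
      rw [h2]
      exact one_mem _
    · push_neg at hs
      have hflat : ∀ l ∈ w, IsFlat l := fun l hl => isFlat_of_ne (hs l hl) (ht l hl)
      have h1 : ι (sumVec w) = 1 := by rw [← evW_flat hflat, hval]
      have h0 : sumVec w = 0 := ι_inj (by rw [h1, ι_zero])
      exact hW (flat_zero hflat hne h0)


lemma exists_syn {w : List GW} (hw : IsWord XW w) : ∃ ws : List L, w = ws.map ev := by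
  induction w with
  | nil => exact ⟨[], rfl⟩
  | cons x w ih =>
      obtain ⟨ws, rfl⟩ := ih (fun y hy => hw y (List.mem_cons_of_mem _ hy))
      rcases hw x (List.mem_cons_self) with ⟨i, hi⟩ | ⟨i, hi⟩
      · refine ⟨(i, true) :: ws, ?_⟩
        rw [List.map_cons]
        congr 1
        rw [← hi]
        simp [ev, γ]
      · refine ⟨(i, false) :: ws, ?_⟩
        rw [List.map_cons]
        congr 1
        have hx : x = (PresentedGroup.of (rels := wiseRels) i)⁻¹ := by
          rw [hi, inv_inv]
        rw [hx]
        simp [ev, γ]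

end GWAux


open GWAux in
/-- Wise's group `G_W = ⟨a,b,c,d,s,t | c=ab, c=ba, d=c², s⁻¹as=d, t⁻¹bt=d⟩` with
generating set `X = {a,b,c,d,s,t}` has the basepoint loop shortening property. -/
theorem GW_basepointLSP : BasepointLSP XW := by
  refine ⟨43, by norm_num, ?_⟩
  intro g₀ w hw hloop hne
  obtain ⟨ws, rfl⟩ := exists_syn hw
  have hwsne : ws ≠ [] := fun h => hne (by rw [h]; rfl)
  have hval : evW ws = 1 := hloop
  obtain ⟨us, h1, h2, h3⟩ := shorten hwsne hval
  refine ⟨us.map ev, isWord_map_ev us, ?_, ?_, syncFellow_of_tracks h3 g₀⟩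
  · exact h1.trans hval
  · simpa using h2


end LoopShortening
end
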